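/- arXiv:2109.02795 — 11 statements merged into one kernel-verified Lean document; each statement's English description precedes it below -/
import Mathlib

section
/- Let L ≥ 2 be an integer. For every real p with 0 ≤ p < 1 − 1/L, the equation x = p + (1−p)·x^L has exactly one solution x in the half-open interval [0,1). Moreover, for every real p with 1 − 1/L ≤ p ≤ 1, the only solution of this equation in the closed interval [0,1] is x = 1. -/
/-- For an integer `L ≥ 2` and real `p` with `0 ≤ p < 1 - 1/L`,
the equation `x = p + (1-p) x^L` has exactly one solution `x ∈ [0,1)`;
and for `1 - 1/L ≤ p ≤ 1`, the only solution in `[0,1]` is `x = 1`. -/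
theorem stmt_0 (L : ℕ) (hL : 2 ≤ L) :
    (∀ p : ℝ, 0 ≤ p → p < 1 - 1/(L:ℝ) →
      ∃! x : ℝ, x ∈ Set.Ico (0:ℝ) 1 ∧ x = p + (1-p) * x^L) ∧
    (∀ p : ℝ, 1 - 1/(L:ℝ) ≤ p → p ≤ 1 →
      ∀ x ∈ Set.Icc (0:ℝ) 1, (x = p + (1-p) * x^L ↔ x = 1)) := by
  set S : ℝ → ℝ := fun x => ∑ i ∈ Finset.range L, x ^ i with hS
  have hL0 : (0:ℝ) < L := by positivity
  have hLR : (2:ℝ) ≤ L := by exact_mod_cast hL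
  have hg : ∀ x : ℝ, (1 - x) * S x = 1 - x ^ L := by
    intro x
    have h := geom_sum_mul x L
    simp only [hS]
    linear_combination -h
  have hkey : ∀ p x : ℝ, (x = p + (1-p) * x^L) ↔ (1 - x) * (1 - (1-p) * S x) = 0 := by
    intro p x
    constructor
    · intro h
      linear_combination -(1-p) * hg x - h
    · intro h
      rcases mul_eq_zero.mp h with h1 | h2
      · have hx : x = 1 := by linarith
        subst hx; simp
      · have h2' : 1 - (1-p) * S x = 0 := h2
        linear_combination -(1-p) * hg x - (1-x) * h2'
  have hS0 : S 0 = 1 := by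
    show (∑ i ∈ Finset.range L, (0:ℝ) ^ i) = 1
    rw [Finset.sum_eq_single 0]
    · simp
    · intro i _ h0; exact zero_pow h0
    · intro h; exact absurd (Finset.mem_range.mpr (by omega)) h
  have hS1 : S 1 = L := by simp [hS]
  have hSnn : ∀ x : ℝ, 0 ≤ x → 0 ≤ S x := by
    intro x hx
    exact Finset.sum_nonneg fun i _ => pow_nonneg hx i
  have hmono : ∀ a b : ℝ, 0 ≤ a → a < b → S a < S b := by
    intro a b ha hab
    apply Finset.sum_lt_sum (fun i _ => pow_le_pow_left₀ ha hab.le i)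
    exact ⟨1, Finset.mem_range.mpr (by omega), by simpa using hab⟩
  have hcont : Continuous S := by
    apply continuous_finset_sum
    intro i _
    exact continuous_pow i
  constructor
  · intro p hp0 hp1
    have hp2 : 1 - p > 0 := by
      have : (1:ℝ)/L > 0 := by positivity
      linarith
    set c : ℝ := 1 / (1 - p) with hc
    have hc1 : 1 ≤ c := by
      rw [hc, le_div_iff₀ hp2]; linarith
    have hcL : c < L := by
      rw [hc, div_lt_iff₀ hp2]
      have h1L : (1:ℝ)/L < 1 - p := by linarith
      have h5 : (1/L : ℝ) * L = 1 := by field_simp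
      nlinarith
    -- IVT
    have hsub : Set.Icc (S 0) (S 1) ⊆ S '' Set.Icc 0 1 :=
      intermediate_value_Icc (by norm_num) hcont.continuousOn
    have hcmem : c ∈ Set.Icc (S 0) (S 1) := by
      rw [hS0, hS1]; exact ⟨hc1, hcL.le⟩
    obtain ⟨x, hxmem, hxS⟩ := hsub hcmem
    have hx1 : x < 1 := by
      rcases lt_or_eq_of_le hxmem.2 with h | h
      · exact h
      · exfalso; rw [h, hS1] at hxS; linarith
    have hxfix : x = p + (1-p) * x^L := by
      rw [hkey]
      have : (1-p) * S x = 1 := by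
        rw [hxS, hc]; field_simp
      rw [this]; ring
    refine ⟨x, ⟨⟨hxmem.1, hx1⟩, hxfix⟩, ?_⟩
    rintro y ⟨⟨hy0, hy1⟩, hyfix⟩
    have hySx : S y = S x := by
      have hy := (hkey p y).mp hyfix
      rcases mul_eq_zero.mp hy with h1 | h2
      · exfalso; linarith
      · have : (1-p) * S y = 1 := by linarith
        have hsy : S y = c := by
          rw [hc]; field_simp at this ⊢; linarith
        rw [hsy, hxS]
    rcases lt_trichotomy y x with h | h | h
    · exfalso; have := hmono y x hy0 h; linarith
    · exact h
    · exfalso; have := hmono x y hxmem.1 h; linarith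
  · intro p hp1 hp2 x ⟨hx0, hx1⟩
    constructor
    · intro hfix
      by_contra hne
      have hxlt : x < 1 := lt_of_le_of_ne hx1 hne
      have hy := (hkey p x).mp hfix
      rcases mul_eq_zero.mp hy with h1 | h2
      · exact hne (by linarith)
      · have heq : (1-p) * S x = 1 := by linarith
        have hpos : 0 < 1 - p := by
          by_contra hle
          push_neg at hle
          have := hSnn x hx0
          nlinarith
        have hlt : S x < L := by
          have := hmono x 1 hx0 hxlt
          rwa [hS1] at this
        have hub : 1 - p ≤ 1 / L := by linarith
        have h3 : (1-p) * S x < (1-p) * L := mul_lt_mul_of_pos_left hlt hpos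
        have h4 : (1-p) * L ≤ (1/L) * L := mul_le_mul_of_nonneg_right hub hL0.le
        have h5 : (1/L : ℝ) * L = 1 := by field_simp
        linarith
    · intro h; subst h; simp
end

section
/- Fix integers k ≥ 2 and d ≥ 3 and set L := (k−1)(d−1). For every real p with 0 ≤ p < 1 − 1/L, the number Q := R(p)^{k−1} is the unique solution in [0,1) of the equation Q = (p + (1−p)·Q^{d−1})^{k−1}. -/
/-!
Writing `x := p + (1-p) Q^(d-1)`, the equation for `Q` says `Q = x^(k-1)`, and then
`x = p + (1-p) x^L` since `L = (k-1)(d-1)`. So it suffices that `t ↦ p + (1-p) t^L` has at most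
one fixed point in `[0,1)`: it also fixes `1`, and a strictly convex map cannot agree with the
identity at three points.
-/

open Set

theorem eq_of_mem_Ico_of_eq_add_mul_pow {n : ℕ} (hn : 2 ≤ n) {p : ℝ} (hp : p < 1) {x y : ℝ}
    (hx : x ∈ Ico 0 1) (hy : y ∈ Ico 0 1)
    (hfx : x = p + (1 - p) * x ^ n) (hfy : y = p + (1 - p) * y ^ n) : x = y := by
  wlog hxy : x < y generalizing x y
  · rcases (not_lt.1 hxy).lt_or_eq with hyx | rfl
    · exact (this hy hx hfy hfx hyx).symm
    · rfl
  have hslope :=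
    (strictConvexOn_pow hn).slope_strict_mono_adjacent hx.1 (mem_Ici.2 zero_le_one) hxy hy.2
  rw [div_lt_div_iff₀ (sub_pos.2 hxy) (sub_pos.2 hy.2)] at hslope
  -- the secants of `t ^ n` over `[x, y]` and `[y, 1]` both have slope `1 / (1 - p)`
  have hsame : (1 - p) * ((y ^ n - x ^ n) * (1 - y)) = (1 - p) * ((1 ^ n - y ^ n) * (y - x)) := by
    linear_combination (y - 1) * (hfy - hfx) + (x - y) * hfy
  exact absurd hsame (mul_lt_mul_of_pos_left hslope (sub_pos.2 hp)).ne

/-- With `L = (k-1)(d-1)` and `R p` the unique root in `[0,1)` of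
`x = p + (1-p) x^L`, the number `Q := (R p)^(k-1)` is the unique solution in `[0,1)`
of `Q = (p + (1-p) Q^(d-1))^(k-1)`. -/
theorem stmt_1 (k d : ℕ) (hk : 2 ≤ k) (hd : 3 ≤ d) (L : ℕ) (hL : L = (k-1)*(d-1))
    (R : ℝ → ℝ)
    (hR : ∀ p : ℝ, 0 ≤ p → p < 1 - 1/(L:ℝ) →
      R p ∈ Set.Ico (0:ℝ) 1 ∧ R p = p + (1-p) * (R p)^L)
    (p : ℝ) (hp0 : 0 ≤ p) (hp1 : p < 1 - 1/(L:ℝ)) :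
    (R p)^(k-1) ∈ Set.Ico (0:ℝ) 1 ∧
    (R p)^(k-1) = (p + (1-p) * ((R p)^(k-1))^(d-1))^(k-1) ∧
    (∀ Q ∈ Set.Ico (0:ℝ) 1, Q = (p + (1-p) * Q^(d-1))^(k-1) → Q = (R p)^(k-1)) := by
  have hL2 : 2 ≤ L := hL ▸ Nat.mul_le_mul (by omega : 1 ≤ k - 1) (by omega : 2 ≤ d - 1)
  have hp : p < 1 := hp1.trans_le (sub_le_self _ (by positivity))
  have hk1 : k - 1 ≠ 0 := by omega
  have hpow : ∀ t : ℝ, (t ^ (k - 1)) ^ (d - 1) = t ^ L := fun t => by rw [← pow_mul, hL]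
  obtain ⟨hRmem, hRfix⟩ := hR p hp0 hp1
  refine ⟨⟨pow_nonneg hRmem.1 _, pow_lt_one₀ hRmem.1 hRmem.2 hk1⟩, by rw [hpow, ← hRfix], ?_⟩
  rintro Q ⟨hQ0, hQ1⟩ hQ
  set x := p + (1 - p) * Q ^ (d - 1)
  have hx0 : 0 ≤ x := add_nonneg hp0 (mul_nonneg (sub_nonneg.2 hp.le) (pow_nonneg hQ0 _))
  have hx1 : x < 1 := (pow_lt_one_iff_of_nonneg hx0 hk1).1 (hQ ▸ hQ1)
  have hxfix : x = p + (1 - p) * x ^ L := by rw [← hpow, ← hQ]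
  rw [hQ, eq_of_mem_Ico_of_eq_add_mul_pow hL2 hp ⟨hx0, hx1⟩ hRmem hxfix hRfix]
end

section
/- For every integer L ≥ 2, the function f(R) := (R − R^L)/(1 − R^L) is concave on the interval [0,1). -/
/-! With `L = n + 2`, the second derivative of `f` is `-L x^(L-2) P(x) / (1 - x^L)^3`, where
`P(x) = (L - 1)(1 - x^(L+1)) - (L + 1)(x - x^L)`. After division by `1 - x`, the inequality
`P ≥ 0` on `[0, 1]` reads `2 (x + ⋯ + x^(L-1)) ≤ (L - 1)(1 + x^L)`, which follows by pairing
`x^j` with `x^(L-j)`, since `a + b ≤ 1 + a b` whenever `a, b ≤ 1`. -/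

open Finset

lemma add_le_one_add_mul {R : Type*} [CommRing R] [PartialOrder R] [IsOrderedRing R] {a b : R}
    (ha : a ≤ 1) (hb : b ≤ 1) : a + b ≤ 1 + a * b := by
  linear_combination mul_nonneg (sub_nonneg.2 ha) (sub_nonneg.2 hb)

lemma two_mul_sum_pow_succ_le {x : ℝ} (h0 : 0 ≤ x) (h1 : x ≤ 1) (m : ℕ) :
    2 * ∑ j ∈ range m, x ^ (j + 1) ≤ m * (1 + x ^ (m + 1)) := by
  have hreflect : ∑ j ∈ range m, x ^ (m - j) = ∑ j ∈ range m, x ^ (j + 1) := by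
    rw [← sum_range_reflect]
    refine sum_congr rfl fun j hj => ?_
    have := mem_range.1 hj
    congr 1
    omega
  calc 2 * ∑ j ∈ range m, x ^ (j + 1) = ∑ j ∈ range m, (x ^ (j + 1) + x ^ (m - j)) := by
        rw [sum_add_distrib, hreflect]; ring
    _ ≤ ∑ _j ∈ range m, (1 + x ^ (m + 1)) := sum_le_sum fun j hj => by
        have := mem_range.1 hj
        calc _ ≤ 1 + x ^ (j + 1) * x ^ (m - j) :=
              add_le_one_add_mul (pow_le_one₀ h0 h1) (pow_le_one₀ h0 h1)
          _ = 1 + x ^ (m + 1) := by rw [← pow_add]; congr 2; omega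
    _ = m * (1 + x ^ (m + 1)) := by rw [sum_const, card_range, nsmul_eq_mul]

lemma mul_sub_pow_le_mul_one_sub_pow {x : ℝ} (h0 : 0 ≤ x) (h1 : x ≤ 1) (m : ℕ) :
    (m + 2) * (x - x ^ (m + 1)) ≤ m * (1 - x ^ (m + 2)) := by
  have hgeom : (1 - x) * ∑ j ∈ range m, x ^ (j + 1) = x - x ^ (m + 1) := by
    have := geom_sum_mul x m
    simp only [pow_succ, ← sum_mul]
    linear_combination (-x) * this
  have := mul_le_mul_of_nonneg_left (two_mul_sum_pow_succ_le h0 h1 m) (sub_nonneg.2 h1)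
  linear_combination this - 2 * hgeom

lemma hasDerivAt_pow_succ (k : ℕ) (x : ℝ) :
    HasDerivAt (fun y : ℝ => y ^ (k + 1)) ((k + 1) * x ^ k) x := by
  simpa using hasDerivAt_pow (k + 1) x

lemma hasDerivAt_sub_pow_div_one_sub_pow (n : ℕ) {x : ℝ} (hx : 1 - x ^ (n + 2) ≠ 0) :
    HasDerivAt (fun y => (y - y ^ (n + 2)) / (1 - y ^ (n + 2)))
      ((1 - (n + 2) * x ^ (n + 1) + (n + 1) * x ^ (n + 2)) / (1 - x ^ (n + 2)) ^ 2) x := by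
  refine (((hasDerivAt_id' x).fun_sub (hasDerivAt_pow_succ (n + 1) x)).fun_div
    ((hasDerivAt_const x 1).fun_sub (hasDerivAt_pow_succ (n + 1) x)) hx).congr_deriv ?_
  push_cast
  ring

lemma hasDerivAt_div_one_sub_pow_sq (n : ℕ) {x : ℝ} (hx : 1 - x ^ (n + 2) ≠ 0) :
    HasDerivAt
      (fun y : ℝ => (1 - (n + 2) * y ^ (n + 1) + (n + 1) * y ^ (n + 2)) / (1 - y ^ (n + 2)) ^ 2)
      (-((n + 2) * x ^ n * ((n + 1) * (1 - x ^ (n + 3)) - (n + 3) * (x - x ^ (n + 2))))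
        / (1 - x ^ (n + 2)) ^ 3) x := by
  have hnum := (((hasDerivAt_pow_succ n x).const_mul ((n : ℝ) + 2)).const_sub 1).fun_add
    ((hasDerivAt_pow_succ (n + 1) x).const_mul ((n : ℝ) + 1))
  have hden := ((hasDerivAt_pow_succ (n + 1) x).const_sub 1).fun_pow 2
  refine (hnum.fun_div hden (pow_ne_zero 2 hx)).congr_deriv ?_
  field_simp
  push_cast
  ring

open Set in
lemma concaveOn_sub_pow_div_one_sub_pow (n : ℕ) :
    ConcaveOn ℝ (Ico 0 1) (fun x : ℝ => (x - x ^ (n + 2)) / (1 - x ^ (n + 2))) := by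
  have hne : ∀ x ∈ Ico (0 : ℝ) 1, 1 - x ^ (n + 2) ≠ 0 := fun x hx =>
    (sub_pos.2 (pow_lt_one₀ hx.1 hx.2 (by omega))).ne'
  have hne' : ∀ x ∈ interior (Ico (0 : ℝ) 1), 1 - x ^ (n + 2) ≠ 0 := fun x hx =>
    hne x (interior_subset hx)
  refine concaveOn_of_hasDerivWithinAt2_nonpos (convex_Ico 0 1)
    (ContinuousOn.div (by fun_prop) (by fun_prop) hne)
    (fun x hx => (hasDerivAt_sub_pow_div_one_sub_pow n (hne' x hx)).hasDerivWithinAt)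
    (fun x hx => (hasDerivAt_div_one_sub_pow_sq n (hne' x hx)).hasDerivWithinAt) fun x hx => ?_
  rw [interior_Ico] at hx
  have key := mul_sub_pow_le_mul_one_sub_pow hx.1.le hx.2.le (n + 1)
  push_cast at key
  rw [neg_div, neg_nonpos]
  have hcoeff : 0 ≤ ((n : ℝ) + 2) * x ^ n := mul_nonneg (by positivity) (pow_nonneg hx.1.le n)
  exact div_nonneg (mul_nonneg hcoeff (by linarith))
    (pow_pos (sub_pos.2 (pow_lt_one₀ hx.1.le hx.2 (by omega))) 3).le

/-- For every integer `L ≥ 2`, the function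
`f(R) = (R - R^L)/(1 - R^L)` is concave on `[0,1)`. -/
theorem stmt_2 (L : ℕ) (hL : 2 ≤ L) :
    ConcaveOn ℝ (Set.Ico (0:ℝ) 1) (fun x : ℝ => (x - x^L) / (1 - x^L)) := by
  obtain ⟨n, rfl⟩ := Nat.exists_eq_add_of_le' hL
  exact concaveOn_sub_pow_div_one_sub_pow n
end

section
/- Fix integers k ≥ 2 and d ≥ 3 and set L := (k−1)(d−1). The function p ↦ R(p) is convex on the interval [0, 1 − 1/L]. -/
/-!
Write `G(x) = 1 + x + ⋯ + x^(L-1)`. For `x ≠ 1` the equation `x = p + (1-p) x^L` is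
`(1-p) G(x) = 1`, and `G(1) = L`, so `R` is a right inverse of the increasing map
`φ(x) = 1 - 1/G(x)` on `[0,1]`. The inverse of an increasing concave function is convex, so it
suffices that `1/G` is convex on `[0,1]`, i.e. `G G'' ≤ 2 G'²`. Differentiating
`(1-X) G = 1 - X^L` twice gives
`(1-x)² (2G'² - G G'') = L x^(L-2) ((L+1) + (L-1) x^L - 2G(x))`,
and the last factor is nonnegative by pairing `x^i + x^(L-i) ≤ 1 + x^L`.
-/

open Finset Polynomial

theorem ConcaveOn.convexOn_of_leftInvOn {𝕜 E β : Type*} [Semiring 𝕜] [PartialOrder 𝕜]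
    [AddCommMonoid E] [PartialOrder E] [Module 𝕜 E]
    [AddCommMonoid β] [LinearOrder β] [Module 𝕜 β]
    {s : Set β} {t : Set E} {φ : β → E} {R : E → β} (hφ : ConcaveOn 𝕜 s φ)
    (hφ_mono : StrictMonoOn φ s) (ht : Convex 𝕜 t) (hR : Set.MapsTo R t s)
    (hinv : Set.LeftInvOn φ R t) : ConvexOn 𝕜 t R := by
  refine ⟨ht, fun p hp q hq a b ha hb hab => ?_⟩
  have hpq := ht hp hq ha hb hab
  rw [← hφ_mono.le_iff_le (hR hpq) (hφ.1 (hR hp) (hR hq) ha hb hab)]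
  calc φ (R (a • p + b • q)) = a • φ (R p) + b • φ (R q) := by
        rw [hinv hp, hinv hq, hinv hpq]
    _ ≤ φ (a • R p + b • R q) := hφ.2 (hR hp) (hR hq) ha hb hab

noncomputable def geomPoly (n : ℕ) : ℝ[X] := ∑ i ∈ range n, X ^ i

@[simp]
theorem eval_geomPoly (n : ℕ) (x : ℝ) : (geomPoly n).eval x = ∑ i ∈ range n, x ^ i := by
  simp [geomPoly, eval_finsetSum]

theorem one_sub_X_mul_geomPoly (n : ℕ) : (1 - X) * geomPoly n = 1 - X ^ n :=
  mul_neg_geom_sum X n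

theorem one_sub_X_mul_derivative_geomPoly (n : ℕ) :
    (1 - X) * derivative (geomPoly n) = geomPoly n - C (n : ℝ) * X ^ (n - 1) := by
  have := congrArg derivative (one_sub_X_mul_geomPoly n)
  simp only [derivative_mul, derivative_sub, derivative_one, derivative_X, derivative_X_pow] at this
  linear_combination this

theorem one_sub_X_mul_derivative_derivative_geomPoly (n : ℕ) :
    (1 - X) * derivative (derivative (geomPoly n)) =
      2 * derivative (geomPoly n) - C ((n * (n - 1) : ℕ) : ℝ) * X ^ (n - 2) := by
  have := congrArg derivative (one_sub_X_mul_derivative_geomPoly n)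
  simp only [derivative_mul, derivative_sub, derivative_one, derivative_X, derivative_X_pow,
    derivative_C] at this
  rw [Nat.cast_mul, C_mul, show n - 2 = n - 1 - 1 by omega]
  linear_combination this

/-- `2 G'² - G G''` is `G³ · (1/G)''` for `G = geomPoly n`. -/
theorem one_sub_X_sq_mul_geomPoly_inv_numerator {n : ℕ} (hn : 2 ≤ n) :
    (1 - X) ^ 2 * (2 * derivative (geomPoly n) ^ 2 -
        geomPoly n * derivative (derivative (geomPoly n))) =
      C (n : ℝ) * X ^ (n - 2) *
        (C ((n : ℝ) + 1) + C ((n : ℝ) - 1) * X ^ n - 2 * geomPoly n) := by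
  obtain ⟨m, rfl⟩ := Nat.exists_eq_add_of_le' hn
  have e1 := one_sub_X_mul_geomPoly (m + 2)
  have e2 := one_sub_X_mul_derivative_geomPoly (m + 2)
  have e3 := one_sub_X_mul_derivative_derivative_geomPoly (m + 2)
  simp only [Nat.add_sub_cancel, show m + 2 - 1 = m + 1 by omega] at e2 e3 ⊢
  push_cast at e2 e3 ⊢
  simp only [C_add, C_sub, C_mul, C_1, C_ofNat] at e2 e3 ⊢
  linear_combination
    (2 * ((1 - X) * derivative (geomPoly (m + 2)) - (C (m : ℝ) + 2) * X ^ (m + 1))) * e2 -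
      geomPoly (m + 2) * (1 - X) * e3 + (C (m : ℝ) + 2) * X ^ m * (C (m : ℝ) + 3) * e1

theorem one_add_mul_geom_sum_le {x : ℝ} (hx₀ : 0 ≤ x) (hx₁ : x ≤ 1) (n : ℕ) :
    (1 + x) * ∑ i ∈ range n, x ^ i ≤ n * (1 + x ^ n) := by
  have hreflect : x * ∑ i ∈ range n, x ^ i = ∑ i ∈ range n, x ^ (n - i) := by
    rw [mul_sum, ← sum_range_reflect]
    refine sum_congr rfl fun i hi => ?_
    rw [← pow_succ', show n - 1 - i + 1 = n - i by have := mem_range.1 hi; omega]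
  have hpair : ∀ i ∈ range n, x ^ i + x ^ (n - i) ≤ 1 + x ^ n := by
    intro i hi
    have hprod : x ^ i * x ^ (n - i) = x ^ n := by
      rw [← pow_add, Nat.add_sub_cancel' (mem_range.1 hi).le]
    nlinarith [mul_nonneg (sub_nonneg.2 (pow_le_one₀ hx₀ hx₁ (n := i)))
      (sub_nonneg.2 (pow_le_one₀ hx₀ hx₁ (n := n - i)))]
  calc (1 + x) * ∑ i ∈ range n, x ^ i = ∑ i ∈ range n, (x ^ i + x ^ (n - i)) := by
        rw [add_mul, one_mul, hreflect, sum_add_distrib]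
    _ ≤ ∑ _i ∈ range n, (1 + x ^ n) := sum_le_sum hpair
    _ = n * (1 + x ^ n) := by rw [sum_const, card_range, nsmul_eq_mul]

theorem geomPoly_mul_derivative_derivative_le {n : ℕ} (hn : 2 ≤ n) {x : ℝ} (hx₀ : 0 ≤ x)
    (hx₁ : x < 1) :
    (geomPoly n).eval x * (derivative (derivative (geomPoly n))).eval x ≤
      2 * (derivative (geomPoly n)).eval x ^ 2 := by
  have hidentity := congrArg (eval x) (one_sub_X_sq_mul_geomPoly_inv_numerator hn)
  simp only [eval_mul, eval_sub, eval_pow, eval_add, eval_C, eval_X, eval_one, eval_ofNat,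
    eval_geomPoly] at hidentity
  have hbound : 2 * ∑ i ∈ range n, x ^ i ≤ (n + 1) + (n - 1) * x ^ n := by
    linarith [one_add_mul_geom_sum_le hx₀ hx₁.le n, mul_neg_geom_sum x n]
  have hscaled : 0 ≤ (1 - x) ^ 2 * (2 * (derivative (geomPoly n)).eval x ^ 2 -
      (geomPoly n).eval x * (derivative (derivative (geomPoly n))).eval x) := by
    rw [eval_geomPoly, hidentity]
    exact mul_nonneg (by positivity) (by linarith)
  linarith [(mul_nonneg_iff_of_pos_left (pow_pos (sub_pos.2 hx₁) 2)).mp hscaled]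

theorem convexOn_inv_eval_geomPoly {n : ℕ} (hn : 2 ≤ n) :
    ConvexOn ℝ (Set.Icc 0 1) fun x => ((geomPoly n).eval x)⁻¹ := by
  set G := geomPoly n
  have hG : ∀ x : ℝ, 0 ≤ x → 0 < G.eval x := fun x hx => by
    simpa [G] using geom_sum_pos hx (by omega)
  refine convexOn_of_hasDerivWithinAt2_nonneg (convex_Icc 0 1)
    (f' := fun x => -(derivative G).eval x / G.eval x ^ 2)
    (f'' := fun x => (2 * (derivative G).eval x ^ 2 -
      G.eval x * (derivative (derivative G)).eval x) / G.eval x ^ 3) ?_ ?_ ?_ ?_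
  · exact G.continuous.continuousOn.inv₀ fun x hx => (hG x hx.1).ne'
  · intro x hx
    rw [interior_Icc] at hx
    exact ((G.hasDerivAt x).inv (hG x hx.1.le).ne').hasDerivWithinAt
  · intro x hx
    rw [interior_Icc] at hx
    have hGx := (hG x hx.1.le).ne'
    refine HasDerivAt.hasDerivWithinAt ?_
    refine (((derivative G).hasDerivAt x).fun_neg.fun_div ((G.hasDerivAt x).fun_pow 2)
      (pow_ne_zero 2 hGx)).congr_deriv ?_
    field_simp
    ring
  · intro x hx
    rw [interior_Icc] at hx
    exact div_nonneg (by linarith [geomPoly_mul_derivative_derivative_le hn hx.1.le hx.2])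
      (pow_nonneg (hG x hx.1.le).le 3)

theorem strictMonoOn_one_sub_inv_eval_geomPoly {n : ℕ} (hn : 2 ≤ n) :
    StrictMonoOn (fun x => 1 - ((geomPoly n).eval x)⁻¹) (Set.Ici 0) := by
  intro x hx y _ hxy
  have hGlt : (geomPoly n).eval x < (geomPoly n).eval y := by
    simp only [eval_geomPoly]
    exact sum_lt_sum (fun i _ => pow_le_pow_left₀ hx hxy.le i)
      ⟨1, mem_range.2 (by omega), by simpa using hxy⟩
  have hGx : 0 < (geomPoly n).eval x := by simpa using geom_sum_pos hx (by omega : n ≠ 0)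
  simpa using inv_strictAnti₀ hGx hGlt

theorem one_sub_inv_eval_geomPoly_eq {n : ℕ} {x p : ℝ} (hx : x ≠ 1)
    (h : x = p + (1 - p) * x ^ n) : 1 - ((geomPoly n).eval x)⁻¹ = p := by
  have hmul : (1 - p) * ∑ i ∈ range n, x ^ i = 1 := by
    refine mul_left_cancel₀ (sub_ne_zero.2 hx.symm) ?_
    linear_combination (1 - p) * mul_neg_geom_sum x n + h
  rw [eval_geomPoly, ← eq_inv_of_mul_eq_one_left hmul]
  ring

/-- With `L = (k-1)(d-1)`, the function `p ↦ R(p)` is convex on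
`[0, 1 - 1/L]`, where `R p` is the unique root in `[0,1)` of `x = p + (1-p) x^L`
for `p ∈ [0, 1-1/L)` and `R (1-1/L) = 1`. -/
theorem stmt_3 (k d : ℕ) (hk : 2 ≤ k) (hd : 3 ≤ d) (L : ℕ) (hL : L = (k-1)*(d-1))
    (R : ℝ → ℝ)
    (hR : ∀ p : ℝ, 0 ≤ p → p < 1 - 1/(L:ℝ) →
      R p ∈ Set.Ico (0:ℝ) 1 ∧ R p = p + (1-p) * (R p)^L)
    (hR1 : R (1 - 1/(L:ℝ)) = 1) :
    ConvexOn ℝ (Set.Icc (0:ℝ) (1 - 1/(L:ℝ))) R := by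
  have hL2 : 2 ≤ L :=
    hL ▸ Nat.mul_le_mul (show 1 ≤ k - 1 by omega) (show 2 ≤ d - 1 by omega)
  have hRφ : ∀ p ∈ Set.Icc 0 (1 - 1 / (L : ℝ)),
      R p ∈ Set.Icc 0 1 ∧ 1 - ((geomPoly L).eval (R p))⁻¹ = p := by
    rintro p ⟨hp₀, hpc⟩
    rcases hpc.lt_or_eq with hpc | rfl
    · obtain ⟨⟨hR₀, hR₁⟩, hfix⟩ := hR p hp₀ hpc
      exact ⟨⟨hR₀, hR₁.le⟩, one_sub_inv_eval_geomPoly_eq hR₁.ne hfix⟩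
    · rw [hR1]
      simp [one_div]
  have hφ_concave := (concaveOn_const 1 (convex_Icc 0 1)).sub (convexOn_inv_eval_geomPoly hL2)
  exact hφ_concave.convexOn_of_leftInvOn
    ((strictMonoOn_one_sub_inv_eval_geomPoly hL2).mono Set.Icc_subset_Ici_self)
    (convex_Icc _ _) (fun p hp => (hRφ p hp).1) (fun p hp => (hRφ p hp).2)
end

section
/- Fix integers k ≥ 2 and d ≥ 3 and set L := (k−1)(d−1). For every p ∈ [0, 1 − 1/L], the value R(p) satisfies R(p) ≤ (L/(L−1))·p. -/
/-- With `L = (k-1)(d-1)`, for every `p ∈ [0, 1-1/L]` one has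
`R(p) ≤ (L/(L-1)) p`. -/
theorem stmt_4 (k d : ℕ) (hk : 2 ≤ k) (hd : 3 ≤ d) (L : ℕ) (hL : L = (k-1)*(d-1))
    (R : ℝ → ℝ)
    (hR : ∀ p : ℝ, 0 ≤ p → p < 1 - 1/(L:ℝ) →
      R p ∈ Set.Ico (0:ℝ) 1 ∧ R p = p + (1-p) * (R p)^L)
    (hR1 : R (1 - 1/(L:ℝ)) = 1) :
    ∀ p ∈ Set.Icc (0:ℝ) (1 - 1/(L:ℝ)), R p ≤ ((L:ℝ)/((L:ℝ)-1)) * p := by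
  have hL2 : 2 ≤ L := by
    subst hL
    have h1 : 1 ≤ k - 1 := by omega
    have h2 : 2 ≤ d - 1 := by omega
    calc 2 = 1 * 2 := by ring
    _ ≤ (k-1)*(d-1) := Nat.mul_le_mul h1 h2
  have hLR : (2:ℝ) ≤ (L:ℝ) := by exact_mod_cast hL2
  have hL1 : (0:ℝ) < (L:ℝ) - 1 := by linarith
  intro p hp
  obtain ⟨hp0, hp1⟩ := hp
  rcases lt_or_eq_of_le hp1 with hlt | heq
  · -- interior case
    obtain ⟨⟨hx0, hx1⟩, hfix⟩ := hR p hp0 hlt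
    set x := R p with hxdef
    have hpl1 : p < 1 := by
      have : 1 - 1/(L:ℝ) < 1 := by
        have : 0 < 1/(L:ℝ) := by positivity
        linarith
      linarith
    have h1p : 0 < 1 - p := by linarith
    -- (1-p) * (∑ i in range L, x^i) = 1
    have hgeom : (1-p) * (∑ i ∈ Finset.range L, x^i) = 1 := by
      have hx1' : (1:ℝ) - x ≠ 0 := by linarith
      have h1 : (1 - x) * ((1-p) * (∑ i ∈ Finset.range L, x^i)) = (1 - x) * 1 := by
        have hgs : (1 - x) * (∑ i ∈ Finset.range L, x^i) = 1 - x^L := by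
          have := geom_sum_mul x L
          nlinarith [this]
        have : (1-p) * (1 - x^L) = 1 - x := by nlinarith [hfix]
        nlinarith [hgs]
      exact mul_left_cancel₀ hx1' h1
    -- each term x^i ≥ x^(L-1)
    have hterm : ∀ i ∈ Finset.range L, x^(L-1) ≤ x^i := by
      intro i hi
      have hiL : i ≤ L - 1 := by
        have := Finset.mem_range.mp hi; omega
      exact pow_le_pow_of_le_one hx0 (le_of_lt hx1) hiL
    have hsum : (L:ℝ) * x^(L-1) ≤ ∑ i ∈ Finset.range L, x^i := by
      have := Finset.card_nsmul_le_sum (Finset.range L) (fun i => x^i) (x^(L-1)) hterm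
      simpa [Finset.card_range, nsmul_eq_mul] using this
    have hkey : (1-p) * ((L:ℝ) * x^(L-1)) ≤ 1 := by
      calc (1-p) * ((L:ℝ) * x^(L-1)) ≤ (1-p) * (∑ i ∈ Finset.range L, x^i) := by
            apply mul_le_mul_of_nonneg_left hsum (le_of_lt h1p)
        _ = 1 := hgeom
    -- multiply by x ≥ 0 : (1-p) * L * x^L ≤ x
    have hxL : x^(L-1) * x = x^L := by
      rw [← pow_succ]
      congr 1
      omega
    have hkey2 : (1-p) * ((L:ℝ) * x^L) ≤ x := by
      have := mul_le_mul_of_nonneg_right hkey hx0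
      calc (1-p) * ((L:ℝ) * x^L) = (1-p) * ((L:ℝ) * x^(L-1)) * x := by
            rw [← hxL]; ring
        _ ≤ 1 * x := this
        _ = x := one_mul x
    -- finish: (1-p)*x^L = x - p, so L*(x-p) ≤ x, so (L-1)*x ≤ L*p
    have hdiff : (1-p) * x^L = x - p := by linarith [hfix]
    have hfin : ((L:ℝ)-1) * x ≤ (L:ℝ) * p := by nlinarith [hkey2, hdiff]
    rw [div_mul_eq_mul_div, le_div_iff₀ hL1]
    nlinarith [hfin]
  · rw [heq, hR1]
    have hLne : (L:ℝ) ≠ 0 := by linarith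
    have : ((L:ℝ)/((L:ℝ)-1)) * (1 - 1/(L:ℝ)) = 1 := by
      field_simp
    rw [this]
end

section
/- Fix integers k ≥ 2 and d ≥ 3 and set L := (k−1)(d−1). For every p ∈ [0, 1 − 1/L], one has R(p) ≤ p + 4·p^L and Q(p) ≤ (p + 4·p^L)^{k−1}. -/
/-!
With `L = n + 1`, put `m = (1 + 1/n) p`. The tangent-line inequality for `t ↦ t ^ L` at `m`,
evaluated at `1`, gives `p + (1 - p) m ^ L ≤ m`. The map `x ↦ p + (1 - p) x ^ L - x` is strictly
convex and vanishes at `R p < 1` and at `1`, so it is negative strictly between them; hence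
`R p ≤ m`, and `R p ≤ p + R p ^ L ≤ p + (1 + 1/n) ^ (n + 1) p ^ L ≤ p + 4 p ^ L`.
-/

open Real

lemma succ_mul_pow_sub_mul_pow_succ_le_one {x : ℝ} (hx : 0 ≤ x) (n : ℕ) :
    (n + 1) * x ^ n - n * x ^ (n + 1) ≤ 1 := by
  induction n with
  | zero => simp
  | succ n ih =>
    have hstep : 0 ≤ (n + 1) * (x ^ n * (1 - x) ^ 2) := by positivity
    push_cast
    linear_combination ih + hstep

lemma one_add_inv_pow_succ_le_four {n : ℕ} (hn : 1 ≤ n) : (1 + (n : ℝ)⁻¹) ^ (n + 1) ≤ 4 := by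
  rcases (show n = 1 ∨ n = 2 ∨ 3 ≤ n by omega) with rfl | rfl | hn3
  · norm_num
  · norm_num
  · have hinv : (n : ℝ)⁻¹ ≤ 3⁻¹ := inv_anti₀ (by norm_num) (by exact_mod_cast hn3)
    have he : exp 1 ≤ 3 := by linarith [exp_one_lt_d9]
    calc (1 + (n : ℝ)⁻¹) ^ (n + 1) = (1 + (n : ℝ)⁻¹) ^ n * (1 + (n : ℝ)⁻¹) := pow_succ _ _
      _ ≤ 3 * (1 + 3⁻¹) := by gcongr; exact one_add_inv_pow_le_exp.trans he
      _ = 4 := by norm_num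

lemma add_mul_pow_succ_le_of_succ_mul_eq {n : ℕ} {p m : ℝ} (hm : 0 ≤ m)
    (hpm : (n + 1) * p = n * m) : p + (1 - p) * m ^ (n + 1) ≤ m := by
  have h := mul_le_mul_of_nonneg_left (succ_mul_pow_sub_mul_pow_succ_le_one hm n) hm
  have key : (n + 1) * (p + (1 - p) * m ^ (n + 1)) ≤ (n + 1) * m := by
    linear_combination h + (1 - m ^ (n + 1)) * hpm
  exact le_of_mul_le_mul_left key (by positivity)

lemma le_of_eq_add_mul_pow {n : ℕ} (hn : 2 ≤ n) {p x y : ℝ} (hp : p < 1) (hy : 0 ≤ y)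
    (hx1 : x < 1) (hx : x = p + (1 - p) * x ^ n) (hy' : p + (1 - p) * y ^ n ≤ y) : x ≤ y := by
  by_contra! hyx
  have hslope := (strictConvexOn_pow hn).slope_strict_mono_adjacent (Set.mem_Ici.2 hy)
    (Set.mem_Ici.2 zero_le_one) hyx hx1
  rw [one_pow, div_lt_div_iff₀ (by linarith) (by linarith)] at hslope
  have hslope' := mul_lt_mul_of_pos_left hslope (sub_pos.2 hp)
  nlinarith [mul_le_mul_of_nonneg_right hy' (sub_nonneg.2 hx1.le)]

lemma le_one_add_inv_mul_of_eq {n : ℕ} (hn : 1 ≤ n) {p x : ℝ} (hp0 : 0 ≤ p) (hp1 : p < 1)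
    (hx1 : x < 1) (hx : x = p + (1 - p) * x ^ (n + 1)) : x ≤ (1 + (n : ℝ)⁻¹) * p := by
  have hn0 : (n : ℝ) ≠ 0 := by positivity
  refine le_of_eq_add_mul_pow (by omega) hp1 (by positivity) hx1 hx
    (add_mul_pow_succ_le_of_succ_mul_eq (by positivity) ?_)
  field_simp

lemma le_add_four_mul_pow {n : ℕ} (hn : 1 ≤ n) {p x : ℝ} (hp : 0 ≤ p) (hx0 : 0 ≤ x)
    (hx : x = p + (1 - p) * x ^ (n + 1)) (hxp : x ≤ (1 + (n : ℝ)⁻¹) * p) :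
    x ≤ p + 4 * p ^ (n + 1) :=
  calc x = p + (1 - p) * x ^ (n + 1) := hx
    _ ≤ p + x ^ (n + 1) := by nlinarith [pow_nonneg hx0 (n + 1)]
    _ ≤ p + (1 + (n : ℝ)⁻¹) ^ (n + 1) * p ^ (n + 1) := by rw [← mul_pow]; gcongr
    _ ≤ p + 4 * p ^ (n + 1) := by gcongr; exact one_add_inv_pow_succ_le_four hn

/-- With `L = (k-1)(d-1)`, for every `p ∈ [0, 1-1/L]` one has
`R(p) ≤ p + 4 p^L` and `Q(p) = R(p)^(k-1) ≤ (p + 4 p^L)^(k-1)`. -/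
theorem stmt_5 (k d : ℕ) (hk : 2 ≤ k) (hd : 3 ≤ d) (L : ℕ) (hL : L = (k-1)*(d-1))
    (R : ℝ → ℝ)
    (hR : ∀ p : ℝ, 0 ≤ p → p < 1 - 1/(L:ℝ) →
      R p ∈ Set.Ico (0:ℝ) 1 ∧ R p = p + (1-p) * (R p)^L)
    (hR1 : R (1 - 1/(L:ℝ)) = 1) :
    ∀ p ∈ Set.Icc (0:ℝ) (1 - 1/(L:ℝ)),
      R p ≤ p + 4 * p^L ∧ (R p)^(k-1) ≤ (p + 4 * p^L)^(k-1) := by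
  have hL2 : 2 ≤ L := hL ▸ Nat.mul_le_mul (show 1 ≤ k - 1 by omega) (show 2 ≤ d - 1 by omega)
  obtain ⟨n, rfl⟩ : ∃ n, L = n + 1 := ⟨L - 1, by omega⟩
  have hn : 1 ≤ n := by omega
  rintro p ⟨hp0, hp1⟩
  obtain ⟨hR0, hReq, hRp⟩ : 0 ≤ R p ∧ R p = p + (1 - p) * R p ^ (n + 1) ∧
      R p ≤ (1 + (n : ℝ)⁻¹) * p := by
    rcases hp1.lt_or_eq with hlt | rfl
    · obtain ⟨⟨hR0, hR_lt⟩, hReq⟩ := hR p hp0 hlt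
      have hp1 : p < 1 := hlt.trans_le (sub_le_self _ (by positivity))
      exact ⟨hR0, hReq, le_one_add_inv_mul_of_eq hn hp0 hp1 hR_lt hReq⟩
    · have hn0 : (n : ℝ) ≠ 0 := by positivity
      rw [hR1]
      refine ⟨zero_le_one, by ring, (?_ : (1 + (n : ℝ)⁻¹) * (1 - 1 / ((n + 1 : ℕ) : ℝ)) = 1).ge⟩
      push_cast
      field_simp
      ring
  have hbound := le_add_four_mul_pow hn hp0 hR0 hReq hRp
  exact ⟨hbound, pow_le_pow_left₀ hR0 hbound _⟩
end

section
/- Fix integers k ≥ 2 and d ≥ 3 and set L := (k−1)(d−1). There exists a constant C > 0, depending only on d and k, such that for every θ ∈ (0, 1 − 1/L) and every p ∈ [0, θ], one has W(p) ≤ p + C·θ·p^{(d−2)(k−1)}. -/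
set_option maxHeartbeats 1000000 in
/-- With `L = (k-1)(d-1)`, `c = 2 - log₂ 3`, `Q(p) = R(p)^(k-1)`, and
`W` defined (for parameter `θ`) by
`W θ p = p + c(θ-p)·abamo(p^(k-1), d-1) + (1 - p - c(θ-p))·Q(p)^(d-1)` for `p < θ`
and `W θ p = R p` for `p ≥ θ`, there is a constant `C > 0` (depending only on `d,k`)
such that for every `θ ∈ (0, 1-1/L)` and every `p ∈ [0,θ]`,
`W θ p ≤ p + C·θ·p^((d-2)(k-1))`. -/
theorem stmt_7 (k d : ℕ) (hk : 2 ≤ k) (hd : 3 ≤ d) (L : ℕ) (hL : L = (k-1)*(d-1))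
    (R : ℝ → ℝ)
    (hR : ∀ p : ℝ, 0 ≤ p → p < 1 - 1/(L:ℝ) →
      R p ∈ Set.Ico (0:ℝ) 1 ∧ R p = p + (1-p) * (R p)^L)
    (hR1 : ∀ p : ℝ, 1 - 1/(L:ℝ) ≤ p → p ≤ 1 → R p = 1)
    (W : ℝ → ℝ → ℝ)
    (hW : ∀ θ p : ℝ,
      (0 ≤ p → p < θ →
        W θ p = p
          + (2 - Real.logb 2 3) * (θ - p) *
              ((p^(k-1))^(d-1) + ((d:ℝ)-1) * (1 - p^(k-1)) * (p^(k-1))^(d-2))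
          + (1 - p - (2 - Real.logb 2 3) * (θ - p)) * ((R p)^(k-1))^(d-1)) ∧
      (θ ≤ p → p ≤ 1 → W θ p = R p)) :
    ∃ C : ℝ, 0 < C ∧ ∀ θ : ℝ, 0 < θ → θ < 1 - 1/(L:ℝ) →
      ∀ p : ℝ, 0 ≤ p → p ≤ θ → W θ p ≤ p + C * θ * p^((d-2)*(k-1)) := by
  have hL2 : 2 ≤ L := by
    rw [hL]
    calc 2 = 1 * 2 := by norm_num
      _ ≤ (k-1) * (d-1) := Nat.mul_le_mul (by omega) (by omega)
  have hLR : (2:ℝ) ≤ (L:ℝ) := by exact_mod_cast hL2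
  have hLpos : (0:ℝ) < (L:ℝ) := by linarith
  set m := (d-2)*(k-1) with hm
  have hmL : m + 1 ≤ L := by
    have h2 : d - 1 = (d - 2) + 1 := by omega
    calc m + 1 = (d-2)*(k-1) + 1 := rfl
      _ ≤ (d-2)*(k-1) + (k-1) := by omega
      _ = (k-1)*((d-2)+1) := by ring
      _ = L := by rw [hL, h2]
  have hlogb2 : Real.logb 2 3 ≤ 2 := by
    have h4 : Real.logb 2 4 = 2 := by
      rw [show (4:ℝ) = 2^(2:ℕ) by norm_num, Real.logb_pow,
        Real.logb_self_eq_one (by norm_num)]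
      norm_num
    calc Real.logb 2 3 ≤ Real.logb 2 4 :=
          Real.logb_le_logb_of_le (by norm_num) (by norm_num) (by norm_num)
      _ = 2 := h4
  have hlogb1 : 1 ≤ Real.logb 2 3 := by
    calc (1:ℝ) = Real.logb 2 2 := (Real.logb_self_eq_one (by norm_num)).symm
      _ ≤ Real.logb 2 3 :=
          Real.logb_le_logb_of_le (by norm_num) (by norm_num) (by norm_num)
  set c : ℝ := 2 - Real.logb 2 3 with hcdef
  have hc0 : 0 ≤ c := by simp only [hcdef]; linarith
  have hc1 : c ≤ 1 := by simp only [hcdef]; linarith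
  set C1 : ℝ := 2^L + (2*(L:ℝ))^L with hC1def
  have hC1pos : 0 < C1 := by positivity
  -- Key lemma : R p - p ≤ C1 * p^(m+1)
  have key : ∀ p : ℝ, 0 ≤ p → p < 1 - 1/(L:ℝ) → R p - p ≤ C1 * p^(m+1) := by
    intro p hp0 hpL
    obtain ⟨hmem, heq⟩ := hR p hp0 hpL
    obtain ⟨hr0, hr1⟩ := hmem
    set r := R p with hrdef
    rcases le_or_gt p (1/(2*(L:ℝ))) with hsm | hbig
    · -- small p : show r ≤ 2p
      have hp1 : p ≤ 1 := by
        have h1 : (1:ℝ)/(2*(L:ℝ)) ≤ 1 := by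
          rw [div_le_one (by linarith)]; linarith
        linarith
      have hr2p : r ≤ 2*p := by
        rcases eq_or_lt_of_le hp0 with h0 | hppos
        · -- p = 0
          have hp : p = 0 := h0.symm
          subst hp
          have heq0 : r = r^L := by linarith [heq]
          have hle : r^L ≤ r^2 := pow_le_pow_of_le_one hr0 hr1.le hL2
          nlinarith
        · -- 0 < p
          by_contra hcon
          push_neg at hcon
          have h2p1 : 2*p < 1 := by
            have : 2*p ≤ 2*(1/(2*(L:ℝ))) := by linarith
            have h2 : 2*(1/(2*(L:ℝ))) = 1/(L:ℝ) := by field_simp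
            have h3 : (1:ℝ)/(L:ℝ) ≤ 1/2 := by
              apply div_le_div_of_nonneg_left (by norm_num) (by norm_num) hLR
            linarith
          set t : ℝ := (1-r)/(1-2*p) with htdef
          have ht0 : 0 < t := div_pos (by linarith) (by linarith)
          have ht1 : t ≤ 1 := by
            rw [htdef, div_le_one (by linarith)]; linarith
          have hts : t * (1 - 2*p) = 1 - r :=
            div_mul_cancel₀ _ (by linarith : (1:ℝ)-2*p ≠ 0)
          have hcomb : t*(2*p) + (1-t)*1 = r := by linarith [hts]
          have hconv := (convexOn_pow L).2 (Set.mem_Ici.mpr (by linarith : (0:ℝ) ≤ 2*p))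
            (Set.mem_Ici.mpr (zero_le_one)) ht0.le (by linarith : (0:ℝ) ≤ 1 - t)
            (by ring : t + (1-t) = 1)
          simp only [smul_eq_mul] at hconv
          rw [hcomb] at hconv
          -- hconv : r^L ≤ t*(2*p)^L + (1-t)*1^L
          have hkey : (1-p)*(2*p)^L < p := by
            have e1 : (2*p)^L = (2*p)^(L-1) * (2*p) := by
              rw [← pow_succ]; congr 1; omega
            have e2 : (2*p)^(L-1) ≤ ((1:ℝ)/(L:ℝ))^(L-1) := by
              apply pow_le_pow_left₀ (by linarith)
              rw [le_div_iff₀ hLpos]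
              calc 2*p*(L:ℝ) ≤ 2*(1/(2*(L:ℝ)))*(L:ℝ) := by
                    apply mul_le_mul_of_nonneg_right _ hLpos.le
                    linarith
                _ = 1 := by field_simp
            have e3 : ((1:ℝ)/(L:ℝ))^(L-1) ≤ 1/2 := by
              calc ((1:ℝ)/(L:ℝ))^(L-1) ≤ ((1:ℝ)/2)^(L-1) := by
                    apply pow_le_pow_left₀ (by positivity)
                    apply div_le_div_of_nonneg_left (by norm_num) (by norm_num) hLR
                _ ≤ ((1:ℝ)/2)^1 := by
                    apply pow_le_pow_of_le_one (by norm_num) (by norm_num) (by omega)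
                _ = 1/2 := pow_one _
            have e4 : (2*p)^L ≤ p := by
              calc (2*p)^L = (2*p)^(L-1) * (2*p) := e1
                _ ≤ (1/2) * (2*p) := by
                    apply mul_le_mul_of_nonneg_right _ (by linarith)
                    exact le_trans e2 e3
                _ = p := by ring
            have e5 : 0 < (2*p)^L := by positivity
            nlinarith
          have h5 : r ≤ p + (1-p) * (t*(2*p)^L + (1-t)*1^L) := by
            nth_rewrite 1 [heq]
            have := mul_le_mul_of_nonneg_left hconv (show (0:ℝ) ≤ 1-p by linarith)
            linarith
          have h6 := mul_lt_mul_of_pos_left hkey ht0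
          simp only [one_pow] at h5
          linarith [hcomb, h5, h6]
      -- conclude for small p
      have hrL : r - p ≤ (2*p)^L := by
        have h1 : (1-p)*r^L ≤ r^L := by nlinarith [pow_nonneg hr0 L]
        have h2 : r^L ≤ (2*p)^L := pow_le_pow_left₀ hr0 hr2p L
        linarith [heq]
      have h3 : (2*p)^L = 2^L * p^L := mul_pow 2 p L
      have h4 : p^L ≤ p^(m+1) := pow_le_pow_of_le_one hp0 hp1 hmL
      have h5 : (0:ℝ) < (2:ℝ)^L := by positivity
      have h6 : (0:ℝ) ≤ (2*(L:ℝ))^L := by positivity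
      have h7 : (0:ℝ) ≤ p^(m+1) := by positivity
      calc r - p ≤ 2^L * p^L := by rw [← h3]; exact hrL
        _ ≤ 2^L * p^(m+1) := mul_le_mul_of_nonneg_left h4 h5.le
        _ ≤ C1 * p^(m+1) := by
            apply mul_le_mul_of_nonneg_right _ h7
            rw [hC1def]; linarith
    · -- big p : r - p ≤ 1 ≤ (2Lp)^(m+1)
      have h1 : (1:ℝ) ≤ 2*(L:ℝ)*p := by
        rw [div_lt_iff₀ (by linarith : (0:ℝ) < 2*(L:ℝ))] at hbig
        linarith
      have h2 : (1:ℝ) ≤ (2*(L:ℝ)*p)^(m+1) := by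
        calc (1:ℝ) = 1^(m+1) := (one_pow _).symm
          _ ≤ (2*(L:ℝ)*p)^(m+1) := pow_le_pow_left₀ (by norm_num) h1 _
      have h3 : (2*(L:ℝ)*p)^(m+1) = (2*(L:ℝ))^(m+1) * p^(m+1) := mul_pow _ _ _
      have h4 : (2*(L:ℝ))^(m+1) ≤ (2*(L:ℝ))^L := pow_le_pow_right₀ (by linarith) hmL
      have h7 : (0:ℝ) ≤ p^(m+1) := by positivity
      have h8 : (0:ℝ) < (2:ℝ)^L := by positivity
      calc r - p ≤ 1 := by linarith
        _ ≤ (2*(L:ℝ))^(m+1) * p^(m+1) := by rw [← h3]; exact h2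
        _ ≤ (2*(L:ℝ))^L * p^(m+1) := mul_le_mul_of_nonneg_right h4 h7
        _ ≤ C1 * p^(m+1) := by
            apply mul_le_mul_of_nonneg_right _ h7
            rw [hC1def]; linarith
  -- choose the constant
  refine ⟨(d:ℝ) + C1, by positivity, ?_⟩
  intro θ hθ0 hθ1 p hp0 hpθ
  have hp1L : p < 1 - 1/(L:ℝ) := lt_of_le_of_lt hpθ hθ1
  have h1L : (0:ℝ) < 1/(L:ℝ) := by positivity
  have hθ1' : θ ≤ 1 := by linarith
  have hp1 : p ≤ 1 := le_trans hpθ hθ1'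
  obtain ⟨hmem, heq⟩ := hR p hp0 hp1L
  obtain ⟨hr0, hr1⟩ := hmem
  have hkeyp := key p hp0 hp1L
  have hpm0 : (0:ℝ) ≤ p^m := by positivity
  have hpsucc : p^(m+1) = p^m * p := pow_succ p m
  have hpmθ : p^(m+1) ≤ p^m * θ := by
    rw [hpsucc]; exact mul_le_mul_of_nonneg_left hpθ hpm0
  have hd3 : (3:ℝ) ≤ (d:ℝ) := by exact_mod_cast hd
  rcases eq_or_lt_of_le hpθ with hpe | hplt
  · -- p = θ
    have hWp : W θ p = R p := (hW θ p).2 (le_of_eq hpe.symm) hp1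
    rw [hWp]
    have hC1θ : C1 * p^(m+1) ≤ C1 * (θ * p^m) := by
      apply mul_le_mul_of_nonneg_left _ hC1pos.le
      rw [mul_comm θ (p^m)]; exact hpmθ
    have hθpm : (0:ℝ) ≤ θ * p^m := by positivity
    have hdθ : (0:ℝ) ≤ (d:ℝ) * (θ * p^m) := mul_nonneg (by linarith) hθpm
    nlinarith
  · -- p < θ
    rw [(hW θ p).1 hp0 hplt]
    set q : ℝ := p^(k-1) with hqdef
    have hq0 : (0:ℝ) ≤ q := by positivity
    have hq1 : q ≤ 1 := pow_le_one₀ hp0 hp1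
    have hqm : q^(d-2) = p^m := by
      rw [hqdef, ← pow_mul, hm, Nat.mul_comm]
    -- bound on abamo term
    have hd1 : d - 1 = (d-2) + 1 := by omega
    have hqd1 : q^(d-1) ≤ q^(d-2) := by
      rw [hd1, pow_succ]
      nlinarith [pow_nonneg hq0 (d-2)]
    have hqd2 : (0:ℝ) ≤ q^(d-2) := by positivity
    have hqd1' : (0:ℝ) ≤ q^(d-1) := by positivity
    have hAle : q^(d-1) + ((d:ℝ)-1) * (1 - q) * q^(d-2) ≤ (d:ℝ) * p^m := by
      have h2 : ((d:ℝ)-1) * (1 - q) * q^(d-2) ≤ ((d:ℝ)-1) * q^(d-2) := by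
        apply mul_le_mul_of_nonneg_right _ hqd2
        nlinarith [mul_nonneg (by linarith : (0:ℝ) ≤ (d:ℝ)-1) hq0]
      rw [← hqm]
      nlinarith [hqd1, h2]
    have hA0 : (0:ℝ) ≤ q^(d-1) + ((d:ℝ)-1) * (1 - q) * q^(d-2) := by
      have : (0:ℝ) ≤ ((d:ℝ)-1) * (1 - q) * q^(d-2) := by
        apply mul_nonneg (mul_nonneg (by linarith) (by linarith)) hqd2
      linarith
    have hcθ0 : (0:ℝ) ≤ c * (θ - p) := mul_nonneg hc0 (by linarith)
    have hcθ1 : c * (θ - p) ≤ θ := by nlinarith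
    -- first term bound
    have hT1 : c * (θ - p) * (q^(d-1) + ((d:ℝ)-1) * (1 - q) * q^(d-2))
        ≤ (d:ℝ) * (θ * p^m) := by
      calc c * (θ - p) * (q^(d-1) + ((d:ℝ)-1) * (1 - q) * q^(d-2))
          ≤ θ * (q^(d-1) + ((d:ℝ)-1) * (1 - q) * q^(d-2)) :=
            mul_le_mul_of_nonneg_right hcθ1 hA0
        _ ≤ θ * ((d:ℝ) * p^m) := mul_le_mul_of_nonneg_left hAle hθ0.le
        _ = (d:ℝ) * (θ * p^m) := by ring
    -- second term bound
    have hQL : ((R p)^(k-1))^(d-1) = (R p)^L := by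
      rw [← pow_mul, ← hL]
    have hrL0 : (0:ℝ) ≤ (R p)^L := by positivity
    have hT2 : (1 - p - c * (θ - p)) * ((R p)^(k-1))^(d-1) ≤ C1 * (θ * p^m) := by
      rw [hQL]
      have hB : (1 - p - c * (θ - p)) * (R p)^L ≤ (1-p) * (R p)^L := by
        apply mul_le_mul_of_nonneg_right _ hrL0
        linarith
      have hrp : (1-p) * (R p)^L = R p - p := by linarith [heq]
      have hC1θ : C1 * p^(m+1) ≤ C1 * (θ * p^m) := by
        apply mul_le_mul_of_nonneg_left _ hC1pos.le
        rw [mul_comm θ (p^m)]; exact hpmθ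
      linarith
    have hθpm : (0:ℝ) ≤ θ * p^m := by positivity
    nlinarith [hT1, hT2]
end

section
/- Fix integers k ≥ 2 and d ≥ 3 and set L := (k−1)(d−1). There exist constants C > 0 and θ₀ ∈ (0, 1 − 1/L), depending only on d and k, such that for every θ ∈ (0, θ₀], c·∫₀^θ W(p)^L dp ≤ (c/(L+1))·θ^{L+1} + C·θ^{L+2}. -/
/-!
For `0 ≤ p < θ` the `abamo` term is `O(p)` and `R(p) ≤ 2p` (the root of
`x = p + (1-p)x^L` in `[0,1)` is the small one, by strict convexity of `x ↦ x^L`), so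
`W(p) ≤ p + Aθ²` for a constant `A`. Integrating, `∫₀^θ W^L ≤ (θ + Aθ²)^(L+1)/(L+1)`,
which is `θ^(L+1)/(L+1) + O(θ^(L+2))`.
-/

open MeasureTheory Set

lemma two_sub_logb_two_three_mem_Ioc : 2 - Real.logb 2 3 ∈ Ioc 0 1 := by
  have hlt : Real.logb 2 3 < 2 :=
    (Real.logb_lt_iff_lt_rpow (by norm_num) (by norm_num)).2 (by norm_num)
  have hge : 1 ≤ Real.logb 2 3 := by
    rw [← Real.logb_self_eq_one (b := 2) (by norm_num)]
    exact Real.logb_le_logb_of_le (by norm_num) (by norm_num) (by norm_num)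
  constructor <;> linarith

/-- Since `p + (1-p)x^L - x` is strictly convex, vanishes at `1` and is `≤ 0` at `2p`, it is
negative strictly between `2p` and `1`. -/
lemma le_two_mul_of_eq_add_mul_pow {L : ℕ} (hL : 2 ≤ L) {p r : ℝ} (hp0 : 0 ≤ p)
    (hp : p ≤ 1/8) (hr1 : r < 1) (hfix : r = p + (1-p) * r^L) : r ≤ 2*p := by
  by_contra! h
  set t := (1-r) / (1-2*p)
  have ht0 : 0 < t := div_pos (by linarith) (by linarith)
  have ht1 : t < 1 := (div_lt_one (by linarith)).2 (by linarith)
  have hr : t * (2*p) + (1-t) = r := by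
    have : t * (1-2*p) = 1-r := div_mul_cancel₀ _ (by linarith)
    linear_combination -this
  have hconv := (strictConvexOn_pow hL).2 (mem_Ici.2 (by linarith : (0:ℝ) ≤ 2*p))
    (mem_Ici.2 zero_le_one) (by linarith) ht0 (sub_pos.2 ht1) (add_sub_cancel t 1)
  simp only [smul_eq_mul, one_pow, mul_one] at hconv
  rw [hr] at hconv
  have hsmall : (2*p)^L ≤ p/2 := by
    have := pow_le_pow_of_le_one (by linarith) (by linarith) hL (a := 2*p)
    nlinarith
  have hrL : r^L < t * (p/2) + (1-t) := hconv.trans_le (by gcongr)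
  have : r < p + (1-p) * (t * (p/2) + (1-t)) := by
    rw [hfix]; gcongr; linarith
  nlinarith [mul_nonneg ht0.le hp0]

lemma abamo_le {d : ℕ} (hd : 3 ≤ d) {q : ℝ} (hq0 : 0 ≤ q) (hq1 : q ≤ 1) :
    0 ≤ q^(d-1) + ((d:ℝ)-1) * (1-q) * q^(d-2) ∧
      q^(d-1) + ((d:ℝ)-1) * (1-q) * q^(d-2) ≤ d * q := by
  have hd' : (3:ℝ) ≤ d := by exact_mod_cast hd
  have h1 : q^(d-1) ≤ q := pow_le_of_le_one hq0 hq1 (by omega)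
  have h2 : q^(d-2) ≤ q := pow_le_of_le_one hq0 hq1 (by omega)
  have h3 : 0 ≤ q^(d-2) := pow_nonneg hq0 _
  have h4 : (1-q) * q^(d-2) ≤ q := by nlinarith
  constructor
  · have : 0 ≤ ((d:ℝ)-1) * (1-q) * q^(d-2) := by
      apply mul_nonneg (mul_nonneg _ _) h3 <;> linarith
    linarith [pow_nonneg hq0 (d-1)]
  · nlinarith [mul_le_mul_of_nonneg_left h4 (by linarith : (0:ℝ) ≤ d-1)]

lemma mix_le_add_mul_sq {c p θ E ρ a b : ℝ} (hc0 : 0 ≤ c) (hc1 : c ≤ 1) (hp0 : 0 ≤ p)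
    (hpθ : p ≤ θ) (hθ1 : θ ≤ 1) (hE0 : 0 ≤ E) (hE : E ≤ a * θ) (hρ0 : 0 ≤ ρ)
    (hρ : ρ ≤ b * θ^2) :
    0 ≤ p + c * (θ-p) * E + (1 - p - c * (θ-p)) * ρ ∧
      p + c * (θ-p) * E + (1 - p - c * (θ-p)) * ρ ≤ p + (a+b) * θ^2 := by
  have hm0 : 0 ≤ c * (θ-p) := mul_nonneg hc0 (by linarith)
  have hmθ : c * (θ-p) ≤ θ - p := mul_le_of_le_one_left (by linarith) hc1
  have hw0 : 0 ≤ 1 - p - c * (θ-p) := by linarith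
  constructor
  · positivity
  · nlinarith [mul_le_mul (hmθ.trans (sub_le_self θ hp0)) hE hE0 (by linarith),
      mul_le_mul_of_nonneg_right (by linarith : 1 - p - c * (θ-p) ≤ 1) hρ0]

lemma pow_le_two_pow_mul_sq {L : ℕ} (hL : 2 ≤ L) {r θ : ℝ} (hr0 : 0 ≤ r) (hr : r ≤ 2 * θ)
    (hθ1 : θ ≤ 1) : r^L ≤ 2^L * θ^2 := calc
  r^L ≤ (2*θ)^L := pow_le_pow_left₀ hr0 hr L
  _ = 2^L * θ^L := mul_pow 2 θ L
  _ ≤ 2^L * θ^2 := by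
    gcongr 2^L * ?_
    exact pow_le_pow_of_le_one (by linarith) hθ1 hL

lemma intervalIntegral_pow_le_of_le_add {f : ℝ → ℝ} {θ B : ℝ} (n : ℕ) (hθ : 0 ≤ θ)
    (hB : 0 ≤ B) (hf : ∀ p ∈ Ico 0 θ, 0 ≤ f p ∧ f p ≤ p + B) :
    ∫ p in (0:ℝ)..θ, f p ^ n ≤ (θ + B)^(n+1) / (n+1) := by
  by_cases hint : IntervalIntegrable (fun p => f p ^ n) volume 0 θ
  swap
  · rw [intervalIntegral.integral_undef hint]; positivity
  have hae : (fun p => f p ^ n) ≤ᵐ[volume.restrict (Icc 0 θ)] fun p => (p + B)^n := by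
    filter_upwards [ae_restrict_mem measurableSet_Icc,
      ae_restrict_of_ae (compl_mem_ae_iff.mpr (Real.volume_singleton (a := θ)))]
      with p hp hpθ
    obtain ⟨h0, hle⟩ := hf p ⟨hp.1, lt_of_le_of_ne hp.2 hpθ⟩
    exact pow_le_pow_left₀ h0 hle n
  calc ∫ p in (0:ℝ)..θ, f p ^ n
      ≤ ∫ p in (0:ℝ)..θ, (p + B)^n := intervalIntegral.integral_mono_ae_restrict hθ hint
        ((by fun_prop : Continuous fun p : ℝ => (p + B)^n).intervalIntegrable 0 θ) hae
    _ = ((θ + B)^(n+1) - B^(n+1)) / (n+1) := by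
        rw [intervalIntegral.integral_comp_add_right (fun x => x^n), integral_pow, zero_add]
    _ ≤ (θ + B)^(n+1) / (n+1) := by gcongr; exact sub_le_self _ (by positivity)

lemma add_mul_sq_pow_div_le {θ A : ℝ} (n : ℕ) (hθ0 : 0 ≤ θ) (hθ1 : θ ≤ 1) (hA : 0 ≤ A) :
    (θ + A * θ^2)^(n+1) / (n+1) ≤ θ^(n+1) / (n+1) + A * (1+A)^n * θ^(n+2) := by
  have hdiff := (le_abs_self _).trans (abs_pow_sub_pow_le (θ + A * θ^2) θ (n+1))
  have hAθ : 0 ≤ A * θ^2 := by positivity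
  rw [add_sub_cancel_left, abs_of_nonneg hAθ, abs_of_nonneg hθ0, abs_of_nonneg (by positivity),
    max_eq_left (by linarith), Nat.add_sub_cancel] at hdiff
  have hpow : (θ + A * θ^2)^n ≤ (1+A)^n * θ^n := by
    rw [← mul_pow]; gcongr; nlinarith [mul_le_mul_of_nonneg_left hθ1 (mul_nonneg hA hθ0)]
  have hn : (0:ℝ) < n+1 := by positivity
  rw [div_add' _ _ _ hn.ne', div_le_div_iff_of_pos_right hn]
  push_cast at hdiff
  calc (θ + A * θ^2)^(n+1) ≤ θ^(n+1) + A * θ^2 * (n+1) * (θ + A * θ^2)^n := by linarith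
    _ ≤ θ^(n+1) + A * θ^2 * (n+1) * ((1+A)^n * θ^n) := by gcongr
    _ = θ^(n+1) + A * (1+A)^n * θ^(n+2) * (n+1) := by ring

theorem stmt_8_general (k d : ℕ) (hk : 2 ≤ k) (hd : 3 ≤ d) (L : ℕ) (hL : L = (k-1)*(d-1))
    (R : ℝ → ℝ)
    (hR : ∀ p : ℝ, 0 ≤ p → p < 1 - 1/(L:ℝ) →
      R p ∈ Set.Ico (0:ℝ) 1 ∧ R p = p + (1-p) * (R p)^L)
    (W : ℝ → ℝ → ℝ)
    (hW : ∀ θ p : ℝ,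
      (0 ≤ p → p < θ →
        W θ p = p
          + (2 - Real.logb 2 3) * (θ - p) *
              ((p^(k-1))^(d-1) + ((d:ℝ)-1) * (1 - p^(k-1)) * (p^(k-1))^(d-2))
          + (1 - p - (2 - Real.logb 2 3) * (θ - p)) * ((R p)^(k-1))^(d-1)) ∧
      (θ ≤ p → p ≤ 1 → W θ p = R p)) :
    ∃ C θ₀ : ℝ, 0 < C ∧ 0 < θ₀ ∧ θ₀ < 1 - 1/(L:ℝ) ∧
      ∀ θ : ℝ, 0 < θ → θ ≤ θ₀ →
        (2 - Real.logb 2 3) * (∫ p in (0:ℝ)..θ, (W θ p)^L)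
          ≤ ((2 - Real.logb 2 3)/((L:ℝ)+1)) * θ^(L+1) + C * θ^(L+2) := by
  obtain ⟨hc0, hc1⟩ := two_sub_logb_two_three_mem_Ioc
  have hL2 : 2 ≤ L := hL ▸ Nat.mul_le_mul (by omega : 1 ≤ k-1) (by omega : 2 ≤ d-1)
  have hθ₀ : 1/8 < 1 - 1/(L:ℝ) := by
    have : 1/(L:ℝ) ≤ 1/2 := one_div_le_one_div_of_le two_pos (by exact_mod_cast hL2)
    linarith
  set A : ℝ := d + 2^L
  refine ⟨A * (1+A)^L, 1/8, by positivity, by norm_num, hθ₀, fun θ hθ0 hθ => ?_⟩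
  have hW_le : ∀ p ∈ Ico 0 θ, 0 ≤ W θ p ∧ W θ p ≤ p + A * θ^2 := by
    rintro p ⟨hp0, hpθ⟩
    obtain ⟨⟨hR0, hR1⟩, hfix⟩ := hR p hp0 (by linarith)
    have hRp := le_two_mul_of_eq_add_mul_pow hL2 hp0 (by linarith) hR1 hfix
    have hq0 : 0 ≤ p^(k-1) := pow_nonneg hp0 _
    have hqp : p^(k-1) ≤ p := pow_le_of_le_one hp0 (by linarith) (by omega)
    obtain ⟨hE0, hE⟩ := abamo_le hd hq0 (hqp.trans (by linarith))
    rw [(hW θ p).1 hp0 hpθ, ← pow_mul (R p), ← hL]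
    exact mix_le_add_mul_sq hc0.le hc1 hp0 hpθ.le (by linarith) hE0
      (hE.trans (by gcongr; linarith)) (pow_nonneg hR0 L)
      (pow_le_two_pow_mul_sq hL2 hR0 (by linarith) (by linarith))
  calc (2 - Real.logb 2 3) * ∫ p in (0:ℝ)..θ, W θ p ^ L
      ≤ (2 - Real.logb 2 3) * (θ^(L+1) / (L+1) + A * (1+A)^L * θ^(L+2)) := by
        gcongr
        exact (intervalIntegral_pow_le_of_le_add L hθ0.le (by positivity) hW_le).trans
          (add_mul_sq_pow_div_le L hθ0.le (by linarith) (by positivity))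
    _ ≤ ((2 - Real.logb 2 3)/((L:ℝ)+1)) * θ^(L+1) + A * (1+A)^L * θ^(L+2) := by
        rw [mul_add, mul_div_assoc', div_mul_eq_mul_div]
        exact add_le_add le_rfl (mul_le_of_le_one_left (by positivity) hc1)

/-- With notation as in the paper (`L = (k-1)(d-1)`, `c = 2 - log₂ 3`,
`W` as below), there exist constants `C > 0` and `θ₀ ∈ (0, 1-1/L)`, depending only on
`d` and `k`, such that for every `θ ∈ (0, θ₀]`,
`c·∫₀^θ W(p)^L dp ≤ (c/(L+1))·θ^(L+1) + C·θ^(L+2)`. -/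
theorem stmt_8 (k d : ℕ) (hk : 2 ≤ k) (hd : 3 ≤ d) (L : ℕ) (hL : L = (k-1)*(d-1))
    (R : ℝ → ℝ)
    (hR : ∀ p : ℝ, 0 ≤ p → p < 1 - 1/(L:ℝ) →
      R p ∈ Set.Ico (0:ℝ) 1 ∧ R p = p + (1-p) * (R p)^L)
    (hR1 : ∀ p : ℝ, 1 - 1/(L:ℝ) ≤ p → p ≤ 1 → R p = 1)
    (W : ℝ → ℝ → ℝ)
    (hW : ∀ θ p : ℝ,
      (0 ≤ p → p < θ →
        W θ p = p
          + (2 - Real.logb 2 3) * (θ - p) *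
              ((p^(k-1))^(d-1) + ((d:ℝ)-1) * (1 - p^(k-1)) * (p^(k-1))^(d-2))
          + (1 - p - (2 - Real.logb 2 3) * (θ - p)) * ((R p)^(k-1))^(d-1)) ∧
      (θ ≤ p → p ≤ 1 → W θ p = R p)) :
    ∃ C θ₀ : ℝ, 0 < C ∧ 0 < θ₀ ∧ θ₀ < 1 - 1/(L:ℝ) ∧
      ∀ θ : ℝ, 0 < θ → θ ≤ θ₀ →
        (2 - Real.logb 2 3) * (∫ p in (0:ℝ)..θ, (W θ p)^L)
          ≤ ((2 - Real.logb 2 3)/((L:ℝ)+1)) * θ^(L+1) + C * θ^(L+2) :=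
  stmt_8_general k d hk hd L hL R hR W hW
end

section
/- Fix integers k ≥ 2 and d ≥ 3 and set L := (k−1)(d−1). There exist constants C > 0 and θ₀ ∈ (0, 1 − 1/L), depending only on d and k, such that for every θ ∈ (0, θ₀] and every p ∈ [0, θ], one has W(p)^{k−1} − R(p)^{k−1} ≥ c·(θ−p)·L·(p^{L−1} − C·p^L). -/
lemma tangent_pow (n : ℕ) (hn : 1 ≤ n) {x y : ℝ} (hx : 0 ≤ x) (hy : 0 ≤ y) :
    (n:ℝ) * x^(n-1) * (y - x) ≤ y^n - x^n := by
  rcases hx.eq_or_lt with h0 | hxpos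
  · subst h0
    rcases Nat.lt_or_ge n 2 with h | h
    · have : n = 1 := by omega
      subst this; simp
    · have h1 : (0:ℝ)^(n-1) = 0 := by apply zero_pow; omega
      have h2 : (0:ℝ)^n = 0 := by apply zero_pow; omega
      rw [h1, h2]
      simp [pow_nonneg hy]
  · have ha : (-2:ℝ) ≤ y/x - 1 := by
      have : 0 ≤ y/x := div_nonneg hy hxpos.le
      linarith
    have hb := one_add_mul_le_pow ha n
    have hb' : 1 + (n:ℝ) * (y/x - 1) ≤ (y/x)^n := by
      have : (1:ℝ) + (y/x - 1) = y/x := by ring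
      rwa [this] at hb
    have h2 : x^n * (1 + (n:ℝ)*(y/x-1)) ≤ x^n * (y/x)^n :=
      mul_le_mul_of_nonneg_left hb' (pow_nonneg hxpos.le n)
    have h3 : x^n * (y/x)^n = y^n := by rw [div_pow]; field_simp
    have hxn : x^n = x^(n-1)*x := by rw [← pow_succ]; congr 1; omega
    have h4 : x^n * (1 + (n:ℝ)*(y/x-1)) = x^n + (n:ℝ)*x^(n-1)*(y-x) := by
      rw [hxn]; field_simp
    rw [h4, h3] at h2
    linarith

lemma fix_small (L : ℕ) (hL2 : 2 ≤ L) (p r : ℝ) (hp0 : 0 ≤ p) (hp : p ≤ 1/4)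
    (hr0 : 0 ≤ r) (hr1 : r < 1) (heq : r = p + (1-p)*r^L) : r ≤ 2*p := by
  have hhalf : r ≤ 1/2 := by
    by_contra hc
    push_neg at hc
    set a : ℝ := 2*(1-r) with ha
    set b : ℝ := 2*r - 1 with hb
    have ha0 : 0 ≤ a := by simp [ha]; linarith
    have hb0 : 0 ≤ b := by simp [hb]; linarith
    have hab : a + b = 1 := by simp [ha, hb]; ring
    have hconv := (convexOn_pow L).2 (Set.mem_Ici.mpr (by norm_num : (0:ℝ) ≤ 1/2))
      (Set.mem_Ici.mpr (by norm_num : (0:ℝ) ≤ 1)) ha0 hb0 hab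
    simp only [smul_eq_mul] at hconv
    have hr_eq : a * (1/2) + b * 1 = r := by simp [ha, hb]; ring
    rw [hr_eq] at hconv
    have hs : (1/2:ℝ)^L ≤ 1/4 := by
      calc (1/2:ℝ)^L ≤ (1/2:ℝ)^2 := by
            apply pow_le_pow_of_le_one (by norm_num) (by norm_num) hL2
        _ = 1/4 := by norm_num
    have hconv' : r^L ≤ (3*r-1)/2 := by
      have h1 : a * (1/2)^L ≤ a * (1/4) := mul_le_mul_of_nonneg_left hs ha0
      have : r^L ≤ a/4 + b := by rw [one_pow, mul_one] at hconv; linarith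
      simp only [ha, hb] at this; linarith
    have h2 : (1-p) * r^L ≤ (1-p) * ((3*r-1)/2) :=
      mul_le_mul_of_nonneg_left hconv' (by linarith)
    nlinarith [h2, heq]
  have hrL : r^L ≤ r^2 := pow_le_pow_of_le_one hr0 hr1.le hL2
  nlinarith [heq, hrL, sq_nonneg r]

set_option maxHeartbeats 1000000 in
/-- With notation as in the paper, there exist constants `C > 0` and
`θ₀ ∈ (0, 1-1/L)`, depending only on `d` and `k`, such that for every `θ ∈ (0, θ₀]`
and every `p ∈ [0, θ]`,
`W(p)^(k-1) - R(p)^(k-1) ≥ c·(θ-p)·L·(p^(L-1) - C·p^L)`. -/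
theorem stmt_11 (k d : ℕ) (hk : 2 ≤ k) (hd : 3 ≤ d) (L : ℕ) (hL : L = (k-1)*(d-1))
    (R : ℝ → ℝ)
    (hR : ∀ p : ℝ, 0 ≤ p → p < 1 - 1/(L:ℝ) →
      R p ∈ Set.Ico (0:ℝ) 1 ∧ R p = p + (1-p) * (R p)^L)
    (hR1 : ∀ p : ℝ, 1 - 1/(L:ℝ) ≤ p → p ≤ 1 → R p = 1)
    (W : ℝ → ℝ → ℝ)
    (hW : ∀ θ p : ℝ,
      (0 ≤ p → p < θ →
        W θ p = p
          + (2 - Real.logb 2 3) * (θ - p) *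
              ((p^(k-1))^(d-1) + ((d:ℝ)-1) * (1 - p^(k-1)) * (p^(k-1))^(d-2))
          + (1 - p - (2 - Real.logb 2 3) * (θ - p)) * ((R p)^(k-1))^(d-1)) ∧
      (θ ≤ p → p ≤ 1 → W θ p = R p)) :
    ∃ C θ₀ : ℝ, 0 < C ∧ 0 < θ₀ ∧ θ₀ < 1 - 1/(L:ℝ) ∧
      ∀ θ : ℝ, 0 < θ → θ ≤ θ₀ → ∀ p : ℝ, 0 ≤ p → p ≤ θ →
        (W θ p)^(k-1) - (R p)^(k-1) ≥
          (2 - Real.logb 2 3) * (θ - p) * (L:ℝ) * (p^(L-1) - C * p^L) := by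
  -- basic numeric facts
  have hL2 : 2 ≤ L := by
    rw [hL]
    calc 2 = 1 * 2 := by norm_num
      _ ≤ (k-1)*(d-1) := Nat.mul_le_mul (by omega) (by omega)
  have hLpos : (0:ℝ) < L := by exact_mod_cast (show 0 < L by omega)
  have hL2R : (2:ℝ) ≤ L := by exact_mod_cast hL2
  have hinv : 1/(L:ℝ) ≤ 1/2 := by
    rw [div_le_div_iff₀ hLpos (by norm_num)]; linarith
  -- bounds on c = 2 - logb 2 3
  have hlog1 : (1:ℝ) ≤ Real.logb 2 3 := by
    rw [show (1:ℝ) = Real.logb 2 2 from (Real.logb_self_eq_one (by norm_num : (1:ℝ) < 2)).symm]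
    exact Real.logb_le_logb_of_le (by norm_num) (by norm_num) (by norm_num)
  have hlog2 : Real.logb 2 3 < 2 := by
    have h4 : Real.logb 2 4 = 2 := by
      rw [show (4:ℝ) = 2^(2:ℕ) by norm_num, Real.logb_pow,
        Real.logb_self_eq_one (by norm_num : (1:ℝ) < 2)]
      norm_num
    have h5 := Real.logb_lt_logb (by norm_num : (1:ℝ) < 2) (by norm_num : (0:ℝ) < 3) (by norm_num : (3:ℝ) < 4)
    linarith
  set c : ℝ := 2 - Real.logb 2 3 with hc
  have hc0 : 0 < c := by simp [hc]; linarith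
  have hc1 : c ≤ 1 := by simp [hc]; linarith
  -- choose constants
  refine ⟨1 + ((k:ℝ)-1) * 2^(L+k-2) / L, 1/4, ?_, by norm_num, by linarith, ?_⟩
  · have : (0:ℝ) < ((k:ℝ)-1) * 2^(L+k-2) / L := by
      apply div_pos _ hLpos
      apply mul_pos _ (by positivity)
      have : (2:ℝ) ≤ k := by exact_mod_cast hk
      linarith
    linarith
  set C : ℝ := 1 + ((k:ℝ)-1) * 2^(L+k-2) / L with hCdef
  intro θ hθ0 hθ4 p hp0 hpθ
  have hp4 : p ≤ 1/4 := le_trans hpθ hθ4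
  have hp1 : p ≤ 1 := by linarith
  rcases eq_or_lt_of_le hpθ with heq | hlt
  · -- p = θ
    have hWeq : W θ p = R p := (hW θ p).2 (le_of_eq heq.symm) hp1
    rw [hWeq]
    have : θ - p = 0 := by rw [heq]; ring
    rw [this]
    simp
  -- p < θ : main case
  have hplt : p < 1 - 1/(L:ℝ) := by linarith
  obtain ⟨hrmem, hr_eq⟩ := hR p hp0 hplt
  set r : ℝ := R p with hrdef
  have hr0 : 0 ≤ r := hrmem.1
  have hr1 : r < 1 := hrmem.2
  have hpr : p ≤ r := by
    have h1 : 0 ≤ (1-p) * r^L := mul_nonneg (by linarith) (pow_nonneg hr0 L)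
    linarith [hr_eq]
  have hr2p : r ≤ 2*p := fix_small L hL2 p r hp0 hp4 hr0 hr1 hr_eq
  -- abbreviations
  set q : ℝ := p^(k-1) with hqdef
  have hq0 : 0 ≤ q := pow_nonneg hp0 _
  have hq1 : q ≤ 1 := pow_le_one₀ hp0 hp1
  set A : ℝ := q^(d-1) + ((d:ℝ)-1) * (1 - q) * q^(d-2) with hAdef
  have hA0 : 0 ≤ A := by
    have h1 : 0 ≤ q^(d-1) := pow_nonneg hq0 _
    have h2 : 0 ≤ ((d:ℝ)-1) * (1 - q) * q^(d-2) := by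
      apply mul_nonneg (mul_nonneg _ (by linarith)) (pow_nonneg hq0 _)
      have : (3:ℝ) ≤ d := by exact_mod_cast hd
      linarith
    simp [hAdef]; linarith
  have hrLpow : ((R p)^(k-1))^(d-1) = r^L := by
    rw [← hrdef, hL, pow_mul]
  have hWform : W θ p = p + c*(θ-p)*A + (1-p-c*(θ-p))*r^L := by
    have := (hW θ p).1 hp0 hlt
    rw [this, hrLpow]
  have hWsub : W θ p - r = c*(θ-p)*(A - r^L) := by
    rw [hWform]
    linear_combination -hr_eq
  -- casts
  have hkR : ((k-1:ℕ):ℝ) = (k:ℝ)-1 := by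
    push_cast [Nat.cast_sub (show 1 ≤ k by omega)]; ring
  have hdR : ((d-1:ℕ):ℝ) = (d:ℝ)-1 := by
    push_cast [Nat.cast_sub (show 1 ≤ d by omega)]; ring
  have hLR : (L:ℝ) = ((k:ℝ)-1)*((d:ℝ)-1) := by
    rw [hL]; push_cast [Nat.cast_sub (show 1 ≤ k by omega), Nat.cast_sub (show 1 ≤ d by omega)]
    ring
  -- exponent identity
  have hexp : k-2 + (k-1)*(d-2) = L-1 := by
    have h1 : (k-1)*(d-1) = (k-1)*(d-2) + (k-1) := by
      have hh : d - 1 = (d-2) + 1 := by omega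
      rw [hh, Nat.mul_add, Nat.mul_one]
    rw [hL]
    set m := (k-1)*(d-2) with hm
    omega
  have e1 : p^(k-2) * q^(d-2) = p^(L-1) := by
    rw [hqdef, ← pow_mul, ← pow_add, hexp]
  -- main estimate (a): lower bound for positive term
  have hA1 : (L:ℝ)*((1-q)*p^(L-1)) ≤ ((k:ℝ)-1) * r^(k-2) * A := by
    have step1 : (L:ℝ)*((1-q)*p^(L-1)) = ((k:ℝ)-1) * p^(k-2) * (((d:ℝ)-1)*(1-q)*q^(d-2)) := by
      rw [hLR, ← e1]; ring
    rw [step1]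
    have hk1 : (0:ℝ) ≤ (k:ℝ)-1 := by
      have : (2:ℝ) ≤ k := by exact_mod_cast hk
      linarith
    have hd1 : (0:ℝ) ≤ (d:ℝ)-1 := by
      have : (3:ℝ) ≤ d := by exact_mod_cast hd
      linarith
    have hpw : p^(k-2) ≤ r^(k-2) := pow_le_pow_left₀ hp0 hpr _
    have hT0 : 0 ≤ ((d:ℝ)-1)*(1-q)*q^(d-2) :=
      mul_nonneg (mul_nonneg hd1 (by linarith)) (pow_nonneg hq0 _)
    have hTA : ((d:ℝ)-1)*(1-q)*q^(d-2) ≤ A := by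
      have : 0 ≤ q^(d-1) := pow_nonneg hq0 _
      simp [hAdef]; linarith
    calc ((k:ℝ)-1) * p^(k-2) * (((d:ℝ)-1)*(1-q)*q^(d-2))
        ≤ ((k:ℝ)-1) * r^(k-2) * (((d:ℝ)-1)*(1-q)*q^(d-2)) := by
          apply mul_le_mul_of_nonneg_right _ hT0
          exact mul_le_mul_of_nonneg_left hpw hk1
      _ ≤ ((k:ℝ)-1) * r^(k-2) * A := by
          apply mul_le_mul_of_nonneg_left hTA
          exact mul_nonneg hk1 (pow_nonneg hr0 _)
  -- estimate (b): upper bound for negative term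
  have hA2 : ((k:ℝ)-1) * r^(k-2) * r^L ≤ ((k:ℝ)-1) * 2^(L+k-2) * p^L := by
    have hk1 : (0:ℝ) ≤ (k:ℝ)-1 := by
      have : (2:ℝ) ≤ k := by exact_mod_cast hk
      linarith
    have h1 : r^(k-2) * r^L = r^(L+k-2) := by rw [← pow_add]; congr 1; omega
    have h2 : r^(L+k-2) ≤ (2*p)^(L+k-2) := pow_le_pow_left₀ hr0 hr2p _
    have h3 : (2*p)^(L+k-2) = 2^(L+k-2) * p^(L+k-2) := mul_pow 2 p _
    have h4 : p^(L+k-2) ≤ p^L := pow_le_pow_of_le_one hp0 hp1 (by omega)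
    calc ((k:ℝ)-1) * r^(k-2) * r^L = ((k:ℝ)-1) * r^(L+k-2) := by rw [mul_assoc, h1]
      _ ≤ ((k:ℝ)-1) * (2^(L+k-2) * p^(L+k-2)) := by
          apply mul_le_mul_of_nonneg_left _ hk1
          rw [← h3]; exact h2
      _ ≤ ((k:ℝ)-1) * (2^(L+k-2) * p^L) := by
          apply mul_le_mul_of_nonneg_left _ hk1
          exact mul_le_mul_of_nonneg_left h4 (by positivity)
      _ = ((k:ℝ)-1) * 2^(L+k-2) * p^L := by ring
  -- estimate (c): q * p^(L-1) ≤ p^L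
  have hqp : q * p^(L-1) ≤ p^L := by
    rw [hqdef, ← pow_add]
    exact pow_le_pow_of_le_one hp0 hp1 (by omega)
  have hqp' : (L:ℝ) * (q * p^(L-1)) ≤ (L:ℝ) * p^L :=
    mul_le_mul_of_nonneg_left hqp hLpos.le
  have hCL : (L:ℝ) * C = (L:ℝ) + ((k:ℝ)-1)*2^(L+k-2) := by
    rw [hCdef]; field_simp
  -- core inequality
  have core : (L:ℝ)*(p^(L-1) - C*p^L) ≤ ((k:ℝ)-1) * r^(k-2) * (A - r^L) := by
    have expand : ((k:ℝ)-1) * r^(k-2) * (A - r^L)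
        = ((k:ℝ)-1) * r^(k-2) * A - ((k:ℝ)-1) * r^(k-2) * r^L := by ring
    rw [expand]
    have h1 : (L:ℝ)*((1-q)*p^(L-1)) = (L:ℝ)*p^(L-1) - (L:ℝ)*(q*p^(L-1)) := by ring
    have h2 : (L:ℝ)*(p^(L-1) - C*p^L) = (L:ℝ)*p^(L-1) - ((L:ℝ)*C)*p^L := by ring
    rw [h2, hCL]
    rw [h1] at hA1
    linarith [hA1, hA2, hqp']
  -- tangent line bound
  have hW0 : 0 ≤ W θ p := by
    rw [hWform]
    have h1 : 0 ≤ c*(θ-p)*A := by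
      apply mul_nonneg (mul_nonneg hc0.le (by linarith)) hA0
    have h2 : 0 ≤ (1-p-c*(θ-p))*r^L := by
      apply mul_nonneg _ (pow_nonneg hr0 _)
      have : c*(θ-p) ≤ 1*(θ-p) := by
        apply mul_le_mul_of_nonneg_right hc1; linarith
      linarith
    linarith
  have htan := tangent_pow (k-1) (by omega) hr0 hW0
  have hk11 : k - 1 - 1 = k - 2 := by omega
  rw [hk11, hkR] at htan
  -- assemble
  have hΔ : 0 ≤ c*(θ-p) := mul_nonneg hc0.le (by linarith)
  have hmul : c*(θ-p) * ((L:ℝ)*(p^(L-1) - C*p^L)) ≤ c*(θ-p) * (((k:ℝ)-1) * r^(k-2) * (A - r^L)) :=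
    mul_le_mul_of_nonneg_left core hΔ
  have hfin : ((k:ℝ)-1) * r^(k-2) * (W θ p - r) = c*(θ-p) * (((k:ℝ)-1) * r^(k-2) * (A - r^L)) := by
    rw [hWsub]; ring
  rw [hfin] at htan
  have : c * (θ-p) * (L:ℝ) * (p^(L-1) - C*p^L) = c*(θ-p) * ((L:ℝ)*(p^(L-1) - C*p^L)) := by ring
  rw [ge_iff_le, this]
  linarith [hmul, htan]
end

section
/- Let n ≥ 1 be an integer and let q', q be reals with 0 ≤ q' ≤ q ≤ 1. Let B be a binomial random variable with n trials and success probability q, and B' a binomial random variable with n trials and success probability q'. Then E[log₂(1 + B')] − E[log₂(1 + B)] ≤ n·(q − q')·log₂(1 − 1/(n+1)). -/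
/-!
With `E_p[g] = ∑ g ν · C(n,ν) p^ν (1-p)^(n-ν)`, one has
`d/dp E_p[g] = n · E'_p[Δg]`, where `E'` is the expectation for `n - 1` trials and
`Δg ν = g (ν + 1) - g ν`. For `g ν = log₂(1 + ν)` the increments on `0 ≤ ν < n` are at least
`log₂((n + 1)/n) = -log₂(1 - 1/(n + 1))`, so the derivative is at least `n` times this, and the
mean value inequality on `[q', q]` gives the bound.
-/

open Finset Polynomial Real

/-- `E[g(B)]` for `B ~ Bin(n, X)`, as a polynomial in the success probability `X`. -/
noncomputable def binomialExpectation (n : ℕ) (g : ℕ → ℝ) : ℝ[X] :=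
  ∑ ν ∈ range (n + 1), C (g ν) * bernsteinPolynomial ℝ n ν

theorem eval_binomialExpectation (n : ℕ) (g : ℕ → ℝ) (x : ℝ) :
    (binomialExpectation n g).eval x =
      ∑ ν ∈ range (n + 1), (n.choose ν : ℝ) * x ^ ν * (1 - x) ^ (n - ν) * g ν := by
  simp only [binomialExpectation, bernsteinPolynomial, eval_finsetSum, eval_mul, eval_C,
    eval_pow, eval_sub, eval_one, eval_X, eval_natCast]
  exact sum_congr rfl fun ν _ => by ring

theorem derivative_binomialExpectation_succ (n : ℕ) (g : ℕ → ℝ) :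
    derivative (binomialExpectation (n + 1) g) =
      (n + 1 : ℝ[X]) * binomialExpectation n (fun ν => g (ν + 1) - g ν) := by
  -- summation by parts; the term `bernsteinPolynomial ℝ n (n + 1)` it produces vanishes
  have hshift : ∑ ν ∈ range (n + 1), C (g (ν + 1)) * ((n + 1) * bernsteinPolynomial ℝ n (ν + 1)) =
      ∑ ν ∈ range (n + 1), (n + 1) * (C (g ν) * bernsteinPolynomial ℝ n ν) -
        C (g 0) * ((n + 1) * bernsteinPolynomial ℝ n 0) := by
    rw [eq_sub_iff_add_eq,
      ← sum_range_succ' (fun ν => C (g ν) * ((n + 1) * bernsteinPolynomial ℝ n ν)), sum_range_succ,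
      bernsteinPolynomial.eq_zero_of_lt ℝ (Nat.lt_succ_self n), mul_zero, mul_zero, add_zero]
    exact sum_congr rfl fun ν _ => mul_left_comm _ _ _
  simp only [binomialExpectation, derivative_sum, derivative_mul, derivative_C, zero_mul,
    zero_add]
  rw [sum_range_succ', bernsteinPolynomial.derivative_zero]
  simp only [bernsteinPolynomial.derivative_succ, Nat.add_sub_cancel, Nat.cast_add, Nat.cast_one,
    C_sub, sub_mul, mul_sub, sum_sub_distrib, hshift]
  rw [sum_congr rfl fun ν _ => mul_left_comm (C (g (ν + 1))) ((n : ℝ[X]) + 1) _]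
  simp only [← mul_sum]
  ring

theorem le_eval_binomialExpectation {n : ℕ} {g : ℕ → ℝ} {c x : ℝ} (hg : ∀ ν ≤ n, c ≤ g ν)
    (hx₀ : 0 ≤ x) (hx₁ : x ≤ 1) : c ≤ (binomialExpectation n g).eval x := by
  have hweights : ∑ ν ∈ range (n + 1), (bernsteinPolynomial ℝ n ν).eval x = 1 := by
    rw [← eval_finsetSum, bernsteinPolynomial.sum, eval_one]
  calc c = ∑ ν ∈ range (n + 1), c * (bernsteinPolynomial ℝ n ν).eval x := by
        rw [← mul_sum, hweights, mul_one]
    _ ≤ (binomialExpectation n g).eval x := by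
      simp only [binomialExpectation, eval_finsetSum, eval_mul, eval_C]
      refine sum_le_sum fun ν hν =>
        mul_le_mul_of_nonneg_right (hg ν (Nat.lt_succ_iff.mp (mem_range.mp hν))) ?_
      have : 0 ≤ 1 - x := by linarith
      simp only [bernsteinPolynomial, eval_mul, eval_pow, eval_sub, eval_one, eval_X, eval_natCast]
      positivity

theorem mul_sub_le_eval_binomialExpectation_sub {n : ℕ} {g : ℕ → ℝ} {c p q : ℝ}
    (hg : ∀ ν < n, c ≤ g (ν + 1) - g ν) (hp : 0 ≤ p) (hpq : p ≤ q) (hq : q ≤ 1) :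
    n * c * (q - p) ≤ (binomialExpectation n g).eval q - (binomialExpectation n g).eval p := by
  cases n with
  | zero => simp [binomialExpectation, bernsteinPolynomial]
  | succ n =>
    refine (convex_Icc (0 : ℝ) 1).mul_sub_le_image_sub_of_le_deriv
      (binomialExpectation (n + 1) g).continuousOn
      (binomialExpectation (n + 1) g).differentiableOn (fun x hx => ?_)
      p ⟨hp, hpq.trans hq⟩ q ⟨hp.trans hpq, hq⟩ hpq
    rw [interior_Icc] at hx
    rw [Polynomial.deriv, derivative_binomialExpectation_succ, eval_mul]
    push_cast
    simp only [eval_add, eval_natCast, eval_one]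
    exact mul_le_mul_of_nonneg_left
      (le_eval_binomialExpectation (fun ν hν => hg ν (Nat.lt_succ_of_le hν)) hx.1.le hx.2.le)
      (by positivity)

theorem logb_add_one_sub_logb_le {b x y : ℝ} (hb : 1 < b) (hx : 0 < x) (hxy : x ≤ y) :
    logb b (y + 1) - logb b y ≤ logb b (x + 1) - logb b x := by
  have hy : 0 < y := hx.trans_le hxy
  rw [← logb_div (by positivity) hy.ne', ← logb_div (by positivity) hx.ne']
  refine logb_le_logb_of_le hb (by positivity) ?_
  rw [div_le_div_iff₀ hy hx]
  linarith

theorem stmt_12_general (n : ℕ) (q' q : ℝ)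
    (h0 : 0 ≤ q') (h1 : q' ≤ q) (h2 : q ≤ 1) :
    (∑ i ∈ Finset.range (n+1),
        (n.choose i : ℝ) * q'^i * (1-q')^(n-i) * Real.logb 2 (1+(i:ℝ)))
    - (∑ i ∈ Finset.range (n+1),
        (n.choose i : ℝ) * q^i * (1-q)^(n-i) * Real.logb 2 (1+(i:ℝ)))
    ≤ (n:ℝ) * (q - q') * Real.logb 2 (1 - 1/((n:ℝ)+1)) := by
  have hinc : ∀ ν < n, -logb 2 (1 - 1 / ((n : ℝ) + 1)) ≤
      logb 2 (1 + ((ν + 1 : ℕ) : ℝ)) - logb 2 (1 + (ν : ℝ)) := by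
    intro ν hν
    have hn : (0 : ℝ) < n := by exact_mod_cast (Nat.zero_lt_of_lt hν)
    have hlog : -logb 2 (1 - 1 / ((n : ℝ) + 1)) = logb 2 ((n : ℝ) + 1) - logb 2 n := by
      rw [one_sub_div (by positivity), add_sub_cancel_right, logb_div hn.ne' (by positivity)]
      ring
    rw [hlog]
    have hcast : (1 : ℝ) + ((ν + 1 : ℕ) : ℝ) = 1 + ν + 1 := by push_cast; ring
    rw [hcast]
    exact logb_add_one_sub_logb_le one_lt_two (by positivity) (by rw [add_comm]; exact_mod_cast hν)
  have hmean := mul_sub_le_eval_binomialExpectation_sub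
    (g := fun i => logb 2 (1 + (i : ℝ))) hinc h0 h1 h2
  rw [eval_binomialExpectation, eval_binomialExpectation] at hmean
  linarith

/-- For `n ≥ 1` and `0 ≤ q' ≤ q ≤ 1`, if `B ~ Bin(n,q)` and
`B' ~ Bin(n,q')`, then `E[log₂(1+B')] - E[log₂(1+B)] ≤ n(q-q')·log₂(1 - 1/(n+1))`. -/
theorem stmt_12 (n : ℕ) (hn : 1 ≤ n) (q' q : ℝ)
    (h0 : 0 ≤ q') (h1 : q' ≤ q) (h2 : q ≤ 1) :
    (∑ i ∈ Finset.range (n+1),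
        (n.choose i : ℝ) * q'^i * (1-q')^(n-i) * Real.logb 2 (1+(i:ℝ)))
    - (∑ i ∈ Finset.range (n+1),
        (n.choose i : ℝ) * q^i * (1-q)^(n-i) * Real.logb 2 (1+(i:ℝ)))
    ≤ (n:ℝ) * (q - q') * Real.logb 2 (1 - 1/((n:ℝ)+1)) :=
  stmt_12_general n q' q h0 h1 h2
end

section
/- Define g : [1,∞) → ℝ by g(t) := log₂(⌊t⌋) + (t − ⌊t⌋)·(log₂(⌊t⌋ + 1) − log₂(⌊t⌋)), and set c := 2 − log₂ 3. Then the function h(t) := c·g(max(2, t)) + (1−c)·g(t) is concave on [1,∞); moreover, h is affine on the interval [1,3] and h(t) = g(t) for all t ≥ 2. -/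
/-!
On `[1, ∞)` the function `h` coincides with the secant line of `log₂` over `[k, k + 1]`,
where `k = max 2 ⌊t⌋`: for `t ≥ 2` this is `g` itself, and on `[1, 2)` the choice of `c` makes
`c · g 2 + (1 - c) · g t` the continuation of the secant over `[2, 3]`. Since `log₂` is concave,
its unit secants over integer intervals have decreasing slopes and lie above `log₂` at the other
integers, so at each `t` the selected secant is the smallest of the secants over `[n, n + 1]`,
`n ≥ 2`. A pointwise attained infimum of affine functions is concave.
-/

open Real Set

section AttainedInf

variable {𝕜 E β ι : Type*} [Semiring 𝕜] [PartialOrder 𝕜] [AddCommMonoid E] [SMul 𝕜 E]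
  [AddCommMonoid β] [PartialOrder β] [IsOrderedAddMonoid β] [Module 𝕜 β] [PosSMulMono 𝕜 β]

theorem concaveOn_of_attained_iInf {s : Set E} {f : E → β} (hs : Convex 𝕜 s)
    (ℓ : ι → E → β) (hℓ : ∀ i, ConcaveOn 𝕜 s (ℓ i)) (i : E → ι)
    (hf : ∀ x ∈ s, f x = ℓ (i x) x) (hle : ∀ x ∈ s, ∀ y ∈ s, f x ≤ ℓ (i y) x) :
    ConcaveOn 𝕜 s f := by
  refine ⟨hs, fun x hx y hy a b ha hb hab => ?_⟩
  have hz : a • x + b • y ∈ s := hs hx hy ha hb hab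
  calc a • f x + b • f y
      ≤ a • ℓ (i (a • x + b • y)) x + b • ℓ (i (a • x + b • y)) y :=
        add_le_add (smul_le_smul_of_nonneg_left (hle x hx _ hz) ha)
          (smul_le_smul_of_nonneg_left (hle y hy _ hz) hb)
    _ ≤ ℓ (i (a • x + b • y)) (a • x + b • y) := (hℓ _).2 hx hy ha hb hab
    _ = f (a • x + b • y) := (hf _ hz).symm

end AttainedInf

noncomputable def unitSecant (φ : ℝ → ℝ) (p t : ℝ) : ℝ :=
  φ p + (t - p) * (φ (p + 1) - φ p)

theorem unitSecant_eq (φ : ℝ → ℝ) (p t : ℝ) :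
    unitSecant φ p t = (φ (p + 1) - φ p) * t + (φ p - p * (φ (p + 1) - φ p)) := by
  unfold unitSecant; ring

theorem concaveOn_unitSecant (φ : ℝ → ℝ) (p : ℝ) {s : Set ℝ} (hs : Convex ℝ s) :
    ConcaveOn ℝ s (unitSecant φ p) := by
  refine ⟨hs, fun x _ y _ a b _ _ hab => le_of_eq ?_⟩
  simp only [unitSecant_eq, smul_eq_mul]
  linear_combination (φ p - p * (φ (p + 1) - φ p)) * hab

namespace ConcaveOn

variable {φ : ℝ → ℝ} {s : Set ℝ}

theorem map_add_one_sub_le_of_le (hφ : ConcaveOn ℝ s φ) {x y : ℝ} (hx : x ∈ s)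
    (hy : y + 1 ∈ s) (hxy : x ≤ y) : φ (y + 1) - φ y ≤ φ (x + 1) - φ x := by
  have hx1 : x + 1 ∈ s := hφ.1.ordConnected.out hx hy ⟨by linarith, by linarith⟩
  have hy0 : y ∈ s := hφ.1.ordConnected.out hx hy ⟨hxy, by linarith⟩
  calc φ (y + 1) - φ y = slope φ y (y + 1) := by simp [slope_def_field]
    _ = slope φ (y + 1) y := slope_comm _ _ _
    _ ≤ slope φ (y + 1) x :=
      hφ.slope_anti hy ⟨hx, (by linarith : x < y + 1).ne⟩ ⟨hy0, (lt_add_one y).ne⟩ hxy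
    _ = slope φ x (y + 1) := slope_comm _ _ _
    _ ≤ slope φ x (x + 1) :=
      hφ.slope_anti hx ⟨hx1, (lt_add_one x).ne'⟩ ⟨hy, (by linarith : x < y + 1).ne'⟩
        (by linarith)
    _ = φ (x + 1) - φ x := by simp [slope_def_field]

theorem le_unitSecant_of_le (hφ : ConcaveOn ℝ s φ) {p x : ℝ} (hx : x ∈ s) (hp : p + 1 ∈ s)
    (hxp : x ≤ p) : φ x ≤ unitSecant φ p x := by
  rcases hxp.eq_or_lt with rfl | hxp
  · simp [unitSecant]
  have h := hφ.slope_anti_adjacent hx hp hxp (lt_add_one p)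
  rw [add_sub_cancel_left, div_one, le_div_iff₀ (sub_pos.2 hxp)] at h
  unfold unitSecant
  linarith

theorem le_unitSecant_of_add_one_le (hφ : ConcaveOn ℝ s φ) {p x : ℝ} (hp : p ∈ s) (hx : x ∈ s)
    (hpx : p + 1 ≤ x) : φ x ≤ unitSecant φ p x := by
  rcases hpx.eq_or_lt with rfl | hpx
  · simp [unitSecant]
  have h := hφ.slope_anti_adjacent hp hx (lt_add_one p) hpx
  rw [add_sub_cancel_left, div_one, div_le_iff₀ (sub_pos.2 hpx)] at h
  unfold unitSecant
  linarith

theorem unitSecant_le_unitSecant_of_le (hφ : ConcaveOn ℝ s φ) {k n : ℤ} (hk : (k : ℝ) ∈ s)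
    (hn : (n : ℝ) + 1 ∈ s) (hkn : k ≤ n) {t : ℝ} (ht : t ≤ k + 1) :
    unitSecant φ k t ≤ unitSecant φ n t := by
  have hk1 : (k : ℝ) + 1 ∈ s :=
    hφ.1.ordConnected.out hk hn ⟨by linarith, by simpa using hkn⟩
  have hslope := hφ.map_add_one_sub_le_of_le hk hn (Int.cast_le.2 hkn)
  have hnext : φ (k + 1) ≤ unitSecant φ n (k + 1) := by
    rcases hkn.eq_or_lt with rfl | hkn
    · simp [unitSecant]
    · exact hφ.le_unitSecant_of_le hk1 hn (by exact_mod_cast hkn)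
  have hsplit : unitSecant φ n t - unitSecant φ k t = (unitSecant φ n (k + 1) - φ (k + 1))
      + (k + 1 - t) * ((φ (k + 1) - φ k) - (φ (n + 1) - φ n)) := by
    unfold unitSecant; ring
  linarith [mul_nonneg (sub_nonneg.2 ht) (sub_nonneg.2 hslope)]

theorem unitSecant_le_unitSecant_of_ge (hφ : ConcaveOn ℝ s φ) {k n : ℤ} (hn : (n : ℝ) ∈ s)
    (hk : (k : ℝ) + 1 ∈ s) (hnk : n ≤ k) {t : ℝ} (ht : k ≤ t) :
    unitSecant φ k t ≤ unitSecant φ n t := by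
  have hk0 : (k : ℝ) ∈ s := hφ.1.ordConnected.out hn hk ⟨by simpa using hnk, by linarith⟩
  have hn1 : (n : ℝ) + 1 ∈ s :=
    hφ.1.ordConnected.out hn hk ⟨by linarith, by simpa using hnk⟩
  have hslope := hφ.map_add_one_sub_le_of_le hn hk (Int.cast_le.2 hnk)
  have hprev : φ k ≤ unitSecant φ n k := by
    rcases hnk.eq_or_lt with rfl | hnk
    · simp [unitSecant]
    · exact hφ.le_unitSecant_of_add_one_le hn hk0 (by exact_mod_cast hnk)
  have hsplit : unitSecant φ n t - unitSecant φ k t = (unitSecant φ n k - φ k)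
      + (t - k) * ((φ (n + 1) - φ n) - (φ (k + 1) - φ k)) := by
    unfold unitSecant; ring
  linarith [mul_nonneg (sub_nonneg.2 ht) (sub_nonneg.2 hslope)]

theorem unitSecant_max_floor_le (hφ : ConcaveOn ℝ (Ici 1) φ) {m n : ℤ} (hmn : m ≤ n)
    (hn : 1 ≤ n) {t : ℝ} (ht : 1 ≤ t) :
    unitSecant φ (max m ⌊t⌋ : ℤ) t ≤ unitSecant φ n t := by
  have hfloor : 1 ≤ ⌊t⌋ := Int.le_floor.2 (by simpa using ht)
  have hk : (1 : ℝ) ≤ (max m ⌊t⌋ : ℤ) := by exact_mod_cast le_max_of_le_right hfloor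
  have hn' : (1 : ℝ) ≤ n := by exact_mod_cast hn
  rcases le_or_gt (max m ⌊t⌋) n with hkn | hnk
  · refine hφ.unitSecant_le_unitSecant_of_le hk (mem_Ici.2 (by linarith)) hkn ?_
    have hfloor_le : (⌊t⌋ : ℝ) ≤ (max m ⌊t⌋ : ℤ) := by exact_mod_cast le_max_right m ⌊t⌋
    linarith [Int.lt_floor_add_one t]
  · have hk_eq : max m ⌊t⌋ = ⌊t⌋ := max_eq_right (by omega)
    refine hφ.unitSecant_le_unitSecant_of_ge hn' (mem_Ici.2 (by linarith)) hnk.le ?_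
    rw [hk_eq]
    exact Int.floor_le t

end ConcaveOn

theorem concaveOn_logb {b : ℝ} (hb : 1 ≤ b) : ConcaveOn ℝ (Ioi 0) (logb b) := by
  have h : logb b = fun x => (log b)⁻¹ • log x := by
    funext x; rw [smul_eq_mul, logb, div_eq_inv_mul]
  rw [h]
  exact strictConcaveOn_log_Ioi.concaveOn.smul (inv_nonneg.2 (log_nonneg hb))

/-- The function `g` of the statement. -/
noncomputable def log2Interp (t : ℝ) : ℝ :=
  unitSecant (logb 2) ⌊t⌋ t

/-- The function `h` of the statement. -/
noncomputable def log2Mix (t : ℝ) : ℝ :=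
  (2 - logb 2 3) * log2Interp (max 2 t) + (1 - (2 - logb 2 3)) * log2Interp t

theorem log2Mix_eq_unitSecant {t : ℝ} (ht : 1 ≤ t) :
    log2Mix t = unitSecant (logb 2) (max 2 ⌊t⌋ : ℤ) t := by
  rcases lt_or_ge t 2 with ht2 | ht2
  · have hfloor : ⌊t⌋ = 1 := Int.floor_eq_iff.2 ⟨by simpa using ht, by norm_num; linarith⟩
    norm_num [log2Mix, log2Interp, unitSecant, max_eq_left ht2.le, hfloor]
    ring
  · have hfloor : 2 ≤ ⌊t⌋ := Int.le_floor.2 (by simpa using ht2)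
    rw [log2Mix, max_eq_right ht2, max_eq_right hfloor, log2Interp]
    ring

theorem log2Mix_eq_unitSecant_two {t : ℝ} (ht : t ∈ Icc 1 3) :
    log2Mix t = unitSecant (logb 2) 2 t := by
  rcases ht.2.lt_or_eq with ht3 | rfl
  · have hfloor : ⌊t⌋ ≤ 2 := Int.lt_add_one_iff.1 (Int.floor_lt.2 (by norm_num; linarith))
    rw [log2Mix_eq_unitSecant ht.1, max_eq_left hfloor]
    norm_num
  · norm_num [log2Mix, log2Interp, unitSecant]
    ring

theorem concaveOn_log2Mix : ConcaveOn ℝ (Ici 1) log2Mix := by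
  have hlog : ConcaveOn ℝ (Ici 1) (logb 2) :=
    (concaveOn_logb one_le_two).subset (fun x hx => mem_Ioi.2 (one_pos.trans_le hx))
      (convex_Ici 1)
  refine concaveOn_of_attained_iInf (convex_Ici 1) (fun n : ℤ => unitSecant (logb 2) n)
    (fun n => concaveOn_unitSecant _ _ (convex_Ici 1)) (fun t => max 2 ⌊t⌋)
    (fun t ht => log2Mix_eq_unitSecant ht) fun t ht z _ => ?_
  rw [log2Mix_eq_unitSecant ht]
  exact hlog.unitSecant_max_floor_le (le_max_left _ _) (le_max_of_le_left one_le_two) ht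

/-- With `g` the piecewise-linear interpolation of `log₂` at the
integers and `c = 2 - log₂ 3`, the function `h(t) = c·g(max(2,t)) + (1-c)·g(t)` is
concave on `[1,∞)`; moreover `h` is affine on `[1,3]` and `h(t) = g(t)` for `t ≥ 2`. -/
theorem stmt_17 (g : ℝ → ℝ)
    (hg : ∀ t : ℝ, g t = Real.logb 2 ((⌊t⌋ : ℝ)) +
      (t - (⌊t⌋ : ℝ)) * (Real.logb 2 ((⌊t⌋ : ℝ) + 1) - Real.logb 2 ((⌊t⌋ : ℝ)))) :
    ConcaveOn ℝ (Set.Ici (1:ℝ))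
      (fun t : ℝ => (2 - Real.logb 2 3) * g (max 2 t)
        + (1 - (2 - Real.logb 2 3)) * g t) ∧
    (∃ a b : ℝ, ∀ t ∈ Set.Icc (1:ℝ) 3,
      (2 - Real.logb 2 3) * g (max 2 t) + (1 - (2 - Real.logb 2 3)) * g t = a * t + b) ∧
    (∀ t : ℝ, 2 ≤ t →
      (2 - Real.logb 2 3) * g (max 2 t) + (1 - (2 - Real.logb 2 3)) * g t = g t) := by
  obtain rfl : g = log2Interp := funext hg
  refine ⟨concaveOn_log2Mix,
    ⟨_, _, fun t ht => (log2Mix_eq_unitSecant_two ht).trans (unitSecant_eq _ _ _)⟩,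
    fun t ht => ?_⟩
  rw [max_eq_right ht]
  ring
end
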